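/- arXiv:2512.24536 — 7 statements merged into one kernel-verified Lean document; each statement's English description precedes it below -/
import Mathlib

section
/- (Combinatorial Nullstellensatz) Let F be a field and f ∈ F[x₁,…,xₙ] a polynomial of total degree t₁ + t₂ + ⋯ + tₙ, where each tᵢ is a nonnegative integer. Suppose the coefficient of the monomial x₁^{t₁} x₂^{t₂} ⋯ xₙ^{tₙ} in f is nonzero. Then for any subsets S₁,…,Sₙ of F with |Sᵢ| ≥ tᵢ + 1, there exist s₁ ∈ S₁, …, sₙ ∈ Sₙ such that f(s₁,…,sₙ) ≠ 0. -/
/-- **Combinatorial Nullstellensatz** (Alon–Tarsi / Alon).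
If `f` is a polynomial over a field `F` in `n` variables whose total degree is
`t₁ + ⋯ + tₙ` and the coefficient of `x₁^{t₁} ⋯ xₙ^{tₙ}` is nonzero, then for any
subsets `Sᵢ ⊆ F` with `|Sᵢ| ≥ tᵢ + 1` there are `sᵢ ∈ Sᵢ` with `f(s₁,…,sₙ) ≠ 0`. -/
theorem combinatorial_nullstellensatz
    {F : Type} [Field F] {n : ℕ} (f : MvPolynomial (Fin n) F) (t : Fin n → ℕ)
    (hdeg : f.totalDegree = ∑ i, t i)
    (hcoeff : MvPolynomial.coeff (Finsupp.equivFunOnFinite.symm t) f ≠ 0)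
    (S : Fin n → Finset F) (hS : ∀ i, t i + 1 ≤ (S i).card) :
    ∃ s : Fin n → F, (∀ i, s i ∈ S i) ∧ MvPolynomial.eval s f ≠ 0 :=
  MvPolynomial.combinatorial_nullstellensatz_exists_eval_nonzero f _ hcoeff
    (by rw [hdeg, Finsupp.degree_eq_sum]; rfl) S hS
end

section
/- Let X = {v₁,…,v₆} be the vertices of a 6-cycle with lists L(vᵢ) such that the antipodal pairs satisfy L(v₁) ∩ L(v₄) = ∅, L(v₂) ∩ L(v₅) = ∅, L(v₃) ∩ L(v₆) = ∅, and |L(vᵢ)| ≥ 3 for i ∈ {1,2,5,6}, |L(v₃)|, |L(v₄)| ≥ 2. Then there exist six pairwise distinct colors c₁,…,c₆ with cᵢ ∈ L(vᵢ) for all i; in particular these colors give a proper coloring of the square of the 6-cycle. -/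
/-!
By Hall's theorem it suffices that any `k` vertices have at least `k` colours in the union of
their lists. Up to three vertices always include one whose list alone is large enough
(only `v₃, v₄` may have lists of size `2`); four or more include an antipodal pair, whose disjoint lists
contribute at least `2 + 3 = 5` colours, and all six include `v₂, v₅` with `3 + 3` colours.
-/

/-- The square of the 6-cycle `v₁ v₂ v₃ v₄ v₅ v₆` (vertices indexed by `Fin 6` in
cyclic order): two distinct vertices are adjacent iff they are not antipodal. -/
def C6sq : SimpleGraph (Fin 6) where
  Adj i j := i ≠ j ∧ j ≠ i + 3
  symm := ⟨by intro i j h; revert i j h; decide⟩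
  loopless := ⟨fun i h => h.1 rfl⟩

open Finset

namespace Finset

variable {ι α : Type*} [DecidableEq α] {L : ι → Finset α} {s : Finset ι} {i j : ι}

theorem card_le_card_biUnion_of_mem (hi : i ∈ s) : #(L i) ≤ #(s.biUnion L) :=
  card_le_card (subset_biUnion_of_mem L hi)

theorem card_add_card_le_card_biUnion_of_disjoint (hi : i ∈ s) (hj : j ∈ s)
    (h : Disjoint (L i) (L j)) : #(L i) + #(L j) ≤ #(s.biUnion L) := by
  rw [← card_union_of_disjoint h]
  exact card_le_card (union_subset (subset_biUnion_of_mem L hi) (subset_biUnion_of_mem L hj))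

end Finset

def c6ListBound : Fin 6 → ℕ := ![3, 3, 2, 2, 3, 3]

theorem exists_mem_card_le_c6ListBound (s : Finset (Fin 6)) (hs : s.Nonempty) :
    (∃ i ∈ s, #s ≤ c6ListBound i) ∨
      ∃ i ∈ s, i + 3 ∈ s ∧ #s ≤ c6ListBound i + c6ListBound (i + 3) := by
  revert s
  decide

/-- If the color lists on the vertices `v₁,…,v₆` of a 6-cycle satisfy that each
antipodal pair has disjoint lists, `|L(vᵢ)| ≥ 3` for `i ∈ {1,2,5,6}` and
`|L(v₃)|, |L(v₄)| ≥ 2`, then there is a system of six pairwise distinct colors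
`cᵢ ∈ L(vᵢ)`; in particular these colors properly color the square of the 6-cycle. -/
theorem c6sq_distinct_colors_of_disjoint_antipodal_lists (L : Fin 6 → Finset ℕ)
    (hd1 : L 0 ∩ L 3 = ∅) (hd2 : L 1 ∩ L 4 = ∅) (hd3 : L 2 ∩ L 5 = ∅)
    (h1 : 3 ≤ (L 0).card) (h2 : 3 ≤ (L 1).card) (h5 : 3 ≤ (L 4).card)
    (h6 : 3 ≤ (L 5).card) (h3 : 2 ≤ (L 2).card) (h4 : 2 ≤ (L 3).card) :
    ∃ c : Fin 6 → ℕ, (∀ i, c i ∈ L i) ∧ Function.Injective c ∧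
      ∀ i j, C6sq.Adj i j → c i ≠ c j := by
  have hbound : ∀ i, c6ListBound i ≤ #(L i) := by
    intro i; fin_cases i <;> assumption
  have hantipodal : ∀ i, Disjoint (L i) (L (i + 3)) := by
    intro i
    rw [disjoint_iff_inter_eq_empty]
    fin_cases i <;> simp_all [inter_comm]
  have hall : ∀ s : Finset (Fin 6), #s ≤ #(s.biUnion L) := by
    intro s
    obtain rfl | hs := s.eq_empty_or_nonempty
    · simp
    rcases exists_mem_card_le_c6ListBound s hs with ⟨i, hi, hs⟩ | ⟨i, hi, hi', hs⟩
    · exact hs.trans ((hbound i).trans (card_le_card_biUnion_of_mem hi))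
    · have := card_add_card_le_card_biUnion_of_disjoint hi hi' (hantipodal i)
      linarith [hbound i, hbound (i + 3)]
  obtain ⟨c, hinj, hmem⟩ := (all_card_le_biUnion_card_iff_exists_injective L).1 hall
  exact ⟨c, hmem, hinj, fun i j hij => hinj.ne hij.ne⟩
end

section
/- Let H be the 'pendant triangle' graph on vertices v₁,…,v₅ where v₁v₂, v₁v₃, v₂v₄, v₃v₄ are edges (a 4-cycle v₁v₂v₄v₃) and v₄v₅ is a pendant edge. Suppose each vertex has a list L with |L(v₁)| ≥ 2, |L(v₅)| ≥ 2, |L(vᵢ)| ≥ 3 for i ∈ {2,3,4}, |L(v₂) ∪ L(v₃) ∪ L(v₄)| ≥ 4, and additionally either |L(v₁)| ≥ 3 or |L(v₁) ∪ L(v₃)| ≥ 5. Then the square H² admits a proper coloring from the lists. -/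
/-! If `L(v₁)` and `L(v₅)` share a colour `c`, give it to both (they are not adjacent in `H²`)
and colour the triangle `v₂ v₃ v₄` from the lists with `c` removed, which by Hall's theorem only
needs the union of these lists to have three elements. Otherwise `H²` may as well be `K₅`, and
Hall's condition for the five lists follows from the cardinality hypotheses: the only subfamilies
not handled by a single list are `{v₂, v₃, v₄}`, those containing `{v₁, v₅}` (whose lists
are then disjoint), and the whole family, which contains `L(v₁) ∪ L(v₃) ∪ L(v₅)`. -/

/-- The square of the "pendant 4-cycle" graph `H` with vertices `v₁,…,v₅`
(indexed `0,…,4`), where `H` consists of the 4-cycle `v₁ v₂ v₄ v₃` together with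
the pendant edge `v₄ v₅`.  In `H²` every pair of distinct vertices is adjacent
except `{v₁, v₅}`, i.e. `H² = K₅` minus the edge `v₁ v₅`. -/
def PendantSq : SimpleGraph (Fin 5) where
  Adj i j := i ≠ j ∧ ¬(i = 0 ∧ j = 4) ∧ ¬(i = 4 ∧ j = 0)
  symm := ⟨by intro i j h; revert i j h; decide⟩
  loopless := ⟨fun i h => h.1 rfl⟩

open Finset

lemma finset_fin_three_cases (s : Finset (Fin 3)) :
    s = ∅ ∨ (#s ≤ 2 ∧ s.Nonempty) ∨ s = univ := by
  revert s; decide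

lemma finset_fin_five_cases (s : Finset (Fin 5)) :
    s = ∅ ∨ (#s ≤ 2 ∧ s.Nonempty) ∨ (#s ≤ 3 ∧ ∃ i ∈ s, i ≠ 0 ∧ i ≠ 4) ∨
      (#s ≤ 4 ∧ {1, 2, 3} ⊆ s) ∨ (#s ≤ 4 ∧ {0, 4} ⊆ s) ∨ {0, 2, 4} ⊆ s := by
  revert s; decide

namespace Finset

variable {α : Type*} [DecidableEq α]

theorem exists_pairwise_ne_mem_of_two_le_card (X Y Z : Finset α)
    (hX : 2 ≤ #X) (hY : 2 ≤ #Y) (hZ : 2 ≤ #Z) (hXYZ : 3 ≤ #(X ∪ Y ∪ Z)) :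
    ∃ x ∈ X, ∃ y ∈ Y, ∃ z ∈ Z, x ≠ y ∧ x ≠ z ∧ y ≠ z := by
  set t : Fin 3 → Finset α := ![X, Y, Z]
  have hall : ∀ s : Finset (Fin 3), #s ≤ #(s.biUnion t) := by
    intro s
    rcases finset_fin_three_cases s with rfl | ⟨hs, i, hi⟩ | rfl
    · simp
    · have : 2 ≤ #(t i) := by fin_cases i <;> assumption
      exact hs.trans (this.trans (card_le_card (subset_biUnion_of_mem t hi)))
    · have : X ∪ Y ∪ Z ⊆ univ.biUnion t := union_subset (union_subset
        (subset_biUnion_of_mem t (mem_univ 0)) (subset_biUnion_of_mem t (mem_univ 1)))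
        (subset_biUnion_of_mem t (mem_univ 2))
      simpa using hXYZ.trans (card_le_card this)
  obtain ⟨f, hf, hft⟩ := (all_card_le_biUnion_card_iff_exists_injective t).1 hall
  exact ⟨f 0, hft 0, f 1, hft 1, f 2, hft 2, hf.ne (by decide), hf.ne (by decide), hf.ne (by decide)⟩

theorem exists_injective_mem_fin_five (L : Fin 5 → Finset α)
    (h0 : 2 ≤ #(L 0)) (h4 : 2 ≤ #(L 4)) (h1 : 3 ≤ #(L 1)) (h2 : 3 ≤ #(L 2)) (h3 : 3 ≤ #(L 3))
    (h123 : 4 ≤ #(L 1 ∪ L 2 ∪ L 3)) (h04 : Disjoint (L 0) (L 4))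
    (h024 : 5 ≤ #(L 0 ∪ L 2 ∪ L 4)) :
    ∃ f : Fin 5 → α, Function.Injective f ∧ ∀ i, f i ∈ L i := by
  refine (all_card_le_biUnion_card_iff_exists_injective L).1 fun s => ?_
  have sub : ∀ {i}, i ∈ s → L i ⊆ s.biUnion L := subset_biUnion_of_mem L
  rcases finset_fin_five_cases s with rfl | ⟨hs, i, hi⟩ | ⟨hs, i, hi, hi0, hi4⟩ | ⟨hs, hsub⟩ |
    ⟨hs, hsub⟩ | hsub
  · simp
  · have : 2 ≤ #(L i) := by fin_cases i <;> simp <;> omega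
    exact hs.trans (this.trans (card_le_card (sub hi)))
  · have : 3 ≤ #(L i) := by fin_cases i <;> simp_all
    exact hs.trans (this.trans (card_le_card (sub hi)))
  · simp only [insert_subset_iff, singleton_subset_iff] at hsub
    exact hs.trans (h123.trans (card_le_card
      (union_subset (union_subset (sub hsub.1) (sub hsub.2.1)) (sub hsub.2.2))))
  · simp only [insert_subset_iff, singleton_subset_iff] at hsub
    have : 4 ≤ #(L 0 ∪ L 4) := by rw [card_union_of_disjoint h04]; omega
    exact hs.trans (this.trans (card_le_card (union_subset (sub hsub.1) (sub hsub.2))))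
  · simp only [insert_subset_iff, singleton_subset_iff] at hsub
    exact (card_le_univ s).trans (h024.trans (card_le_card
      (union_subset (union_subset (sub hsub.1) (sub hsub.2.1)) (sub hsub.2.2))))

end Finset

/-- List coloring of the square of the pendant-4-cycle graph: if `|L(v₁)| ≥ 2`,
`|L(v₅)| ≥ 2`, `|L(vᵢ)| ≥ 3` for `i ∈ {2,3,4}`, `|L(v₂) ∪ L(v₃) ∪ L(v₄)| ≥ 4`, and
moreover `|L(v₁)| ≥ 3` or `|L(v₁) ∪ L(v₃)| ≥ 5`, then `H²` has a proper coloring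
from the lists. -/
theorem pendantSq_colorable_of_lists (L : Fin 5 → Finset ℕ)
    (h1 : 2 ≤ (L 0).card) (h5 : 2 ≤ (L 4).card)
    (h2 : 3 ≤ (L 1).card) (h3 : 3 ≤ (L 2).card) (h4 : 3 ≤ (L 3).card)
    (hu : 4 ≤ (L 1 ∪ L 2 ∪ L 3).card)
    (hextra : 3 ≤ (L 0).card ∨ 5 ≤ (L 0 ∪ L 2).card) :
    ∃ c : Fin 5 → ℕ, (∀ i, c i ∈ L i) ∧ ∀ i j, PendantSq.Adj i j → c i ≠ c j := by
  by_cases hshared : ∃ c ∈ L 0, c ∈ L 4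
  · obtain ⟨c, hc0, hc4⟩ := hshared
    have herase : ∀ {k} (s : Finset ℕ), k + 1 ≤ #s → k ≤ #(s.erase c) := fun s hs => by
      have := pred_card_le_card_erase (s := s) (a := c); omega
    obtain ⟨x, hx, y, hy, z, hz, hxy, hxz, hyz⟩ :=
      exists_pairwise_ne_mem_of_two_le_card ((L 1).erase c) ((L 2).erase c) ((L 3).erase c)
        (herase _ h2) (herase _ h3) (herase _ h4)
        (by simpa only [erase_union_distrib] using herase _ hu)
    rw [mem_erase] at hx hy hz
    refine ⟨![c, x, y, z, c], fun i => by fin_cases i <;> simp_all, ?_⟩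
    rintro i j ⟨hij, h04, h40⟩
    fin_cases i <;> fin_cases j <;> simp_all [eq_comm]
  · have h04 : Disjoint (L 0) (L 4) := disjoint_left.2 fun c h0 h4 => hshared ⟨c, h0, h4⟩
    have h024 : 5 ≤ #(L 0 ∪ L 2 ∪ L 4) := by
      rcases hextra with h | h
      · have : #(L 0 ∪ L 4) ≤ #(L 0 ∪ L 2 ∪ L 4) :=
          card_le_card (union_subset_union_left subset_union_left)
        rw [card_union_of_disjoint h04] at this; omega
      · exact h.trans (card_le_card subset_union_left)
    obtain ⟨f, hf, hfL⟩ := exists_injective_mem_fin_five L h1 h5 h2 h3 h4 hu h04 h024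
    exact ⟨f, hfL, fun i j hij => hf.ne hij.1⟩
end

section
/- Consider the graph J consisting of a path of two 4-cycles joined by a path: vertices v₁,…,v₈ with 4-cycle v₁v₂v₄v₃ (edges v₁v₂, v₁v₃, v₂v₄, v₃v₄), edge v₄v₅, and 4-cycle v₅v₆v₇v₈ (edges v₅v₆, v₆v₇, v₇v₈, v₈v₅). If each vertex vᵢ has a list L(vᵢ) with |L(vᵢ)| = 3 for i ∈ {1,2,3,6,8}, |L(v₄)| = |L(v₅)| = 5, and |L(v₇)| = 2, then the square J² admits a proper coloring from the lists. -/
/-- The square of a graph: two distinct vertices are adjacent iff their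
distance in `G` is at most 2. -/
def square {V : Type} (G : SimpleGraph V) : SimpleGraph V where
  Adj u v := u ≠ v ∧ (G.Adj u v ∨ ∃ w, G.Adj u w ∧ G.Adj w v)
  symm := by
    constructor
    rintro u v ⟨h1, h2⟩
    refine ⟨h1.symm, ?_⟩
    rcases h2 with h | ⟨w, hw1, hw2⟩
    · exact Or.inl h.symm
    · exact Or.inr ⟨w, hw2.symm, hw1.symm⟩
  loopless := ⟨fun v h => h.1 rfl⟩

/-- The graph `J` on vertices `v₁,…,v₈` (indexed `0,…,7`) consisting of the
4-cycle `v₁ v₂ v₄ v₃` (edges `v₁v₂, v₁v₃, v₂v₄, v₃v₄`), the edge `v₄v₅`, and the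
4-cycle `v₅ v₆ v₇ v₈` (edges `v₅v₆, v₆v₇, v₇v₈, v₈v₅`). -/
def Jgraph : SimpleGraph (Fin 8) :=
  SimpleGraph.fromEdgeSet
    ({s(0, 1), s(0, 2), s(1, 3), s(2, 3), s(3, 4), s(4, 5), s(5, 6), s(6, 7), s(7, 4)} :
      Set (Sym2 (Fin 8)))

/-! Colour `v₄, v₅` first with `s ≠ t`. What remains are the triangles `v₁v₂v₃` and `v₆v₇v₈`,
in which `v₁` only has to avoid `s` and `v₇` only `t`. Unless `s` is the only colour of
`L(v₆) ∪ L(v₈)` outside `L(v₇)`, the right triangle and then `t` can be chosen greedily, so it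
suffices to find such an `s` for which the left triangle can be coloured whatever `t` is. By
counting, any `s ∈ L(v₄) ∖ L(v₁)` does this when `L(v₂) ≠ L(v₃)`; when `L(v₂) = L(v₃)`, so does any
`s ∈ L(v₄) ∖ (L(v₁) ∪ L(v₂))`, and any `s ∈ L(v₄) ∖ L(v₂)` if `|L(v₂) ∖ L(v₁)| ≥ 2`. This leaves
only `L(v₆) = L(v₈) = L(v₇) ∪ {v}` with `v` the only colour of `L(v₄)` outside `L(v₁) ∪ L(v₂)`;
then the right triangle uses exactly `L(v₆)`, and among the colours of `L(v₅) ∖ L(v₆)`, of which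
there are at least two, one fits a suitable `s ≠ v`. -/

open Finset

section Triangle

variable {α : Type*} {X Y Z A B C E F G H : Finset α} {a b s t v w : α}

/-- Once `v₄, v₅` are coloured `s, t`, the sides of `J²` left to colour are such triangles:
`v₁v₂v₃` with `(a, b) = (s, t)` and `v₇v₆v₈` with `(a, b) = (t, s)`. -/
def TriangleExtends (X Y Z : Finset α) (a b : α) : Prop :=
  ∃ x ∈ X, ∃ y ∈ Y, ∃ z ∈ Z, x ≠ y ∧ x ≠ z ∧ y ≠ z ∧ x ≠ a ∧ y ≠ a ∧ y ≠ b ∧ z ≠ a ∧ z ≠ b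

theorem TriangleExtends.swap (h : TriangleExtends X Y Z a b) : TriangleExtends X Z Y a b := by
  obtain ⟨x, hx, y, hy, z, hz, hxy, hxz, hyz, hxa, hya, hyb, hza, hzb⟩ := h
  exact ⟨x, hx, z, hz, y, hy, hxz, hxy, hyz.symm, hxa, hza, hzb, hya, hyb⟩

variable [DecidableEq α]

theorem exists_mem_ne_ne (h : 2 < #X) (a b : α) : ∃ x ∈ X, x ≠ a ∧ x ≠ b := by
  obtain ⟨x, hx, hab⟩ :=
    exists_mem_notMem_of_card_lt_card ((card_le_two (a := a) (b := b)).trans_lt h)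
  simp only [mem_insert, mem_singleton, not_or] at hab
  exact ⟨x, hx, hab⟩

theorem exists_ne_of_two_le_card_union (hY : Y.Nonempty) (hZ : Z.Nonempty)
    (h : 2 ≤ #(Y ∪ Z)) : ∃ y ∈ Y, ∃ z ∈ Z, y ≠ z := by
  by_contra! hYZ
  obtain ⟨y, hy⟩ := hY
  have hsub : Y ∪ Z ⊆ {y} := by
    intro x hx
    rcases mem_union.1 hx with hx | hx
    · obtain ⟨z, hz⟩ := hZ
      exact mem_singleton.2 ((hYZ x hx z hz).trans (hYZ y hy z hz).symm)
    · exact mem_singleton.2 (hYZ y hy x hx).symm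
  have := card_le_card hsub
  simp only [card_singleton] at this
  omega

theorem card_lt_card_union_of_ne (hYZ : #Y = #Z) (hne : Y ≠ Z) : #Y < #(Y ∪ Z) := by
  refine (card_le_card subset_union_left).lt_of_ne fun h => hne ?_
  exact (eq_of_subset_of_card_le (subset_union_left : Y ⊆ Y ∪ Z) h.ge).trans
    (eq_of_subset_of_card_le (subset_union_right : Z ⊆ Y ∪ Z) (hYZ ▸ h.ge)).symm

theorem two_le_card_sdiff_pair (hB : 3 ≤ #B) (hs : s ∉ B) (t : α) : 2 ≤ #(B \ {s, t}) := by
  rw [sdiff_insert_of_notMem hs]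
  have := le_card_sdiff {t} B
  simp only [card_singleton] at this
  omega

theorem eq_insert_of_subset_insert (h : F ⊆ insert v G) (hGF : #G < #F) :
    v ∉ G ∧ F = insert v G := by
  have hvG : v ∉ G := fun hv => by
    have := card_le_card (insert_eq_of_mem hv ▸ h)
    omega
  refine ⟨hvG, eq_of_subset_of_card_le h ?_⟩
  rw [card_insert_of_notMem hvG]
  exact hGF

theorem triangleExtends_of_notMem (hA : 3 ≤ #A) (hB : 3 ≤ #B) (hC : 3 ≤ #C) (hsA : s ∉ A)
    (hBC : 2 ≤ #((B ∪ C) \ {s, t})) : TriangleExtends A B C s t := by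
  have hpair : #({s, t} : Finset α) ≤ 2 := card_le_two
  have hB' : (B \ {s, t}).Nonempty := card_pos.1 (by have := le_card_sdiff {s, t} B; omega)
  have hC' : (C \ {s, t}).Nonempty := card_pos.1 (by have := le_card_sdiff {s, t} C; omega)
  obtain ⟨y, hy, z, hz, hyz⟩ :=
    exists_ne_of_two_le_card_union hB' hC' (by rwa [← union_sdiff_distrib])
  obtain ⟨x, hx, hxy, hxz⟩ := exists_mem_ne_ne hA y z
  simp only [mem_sdiff, mem_insert, mem_singleton, not_or] at hy hz
  exact ⟨x, hx, y, hy.1, z, hz.1, hxy, hxz, hyz, ne_of_mem_of_not_mem hx hsA,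
    hy.2.1, hy.2.2, hz.2.1, hz.2.2⟩

theorem triangleExtends_of_mem_sdiff (hA : 3 ≤ #A) (hB : 3 ≤ #B) (hsB : s ∉ B) {q : α}
    (hqB : q ∈ B) (hqA : q ∉ A) (hqt : q ≠ t) : TriangleExtends A B B s t := by
  obtain ⟨z, hz, hzt, hzq⟩ := exists_mem_ne_ne hB t q
  obtain ⟨x, hx, hxs, hxz⟩ := exists_mem_ne_ne hA s z
  exact ⟨x, hx, q, hqB, z, hz, ne_of_mem_of_not_mem hx hqA, hxz, hzq.symm, hxs,
    ne_of_mem_of_not_mem hqB hsB, hqt, ne_of_mem_of_not_mem hz hsB, hzt⟩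

theorem exists_triangleExtends_of_mem_sdiff (hE : 5 ≤ #E) (hG : 2 ≤ #G) (hH : 3 ≤ #H)
    (hwF : w ∈ F) (hwG : w ∉ G) (hws : w ≠ s) : ∃ t ∈ E, t ≠ s ∧ TriangleExtends G F H t s := by
  obtain ⟨z, hz, hzs, hzw⟩ := exists_mem_ne_ne hH s w
  obtain ⟨x, hx, hxz⟩ := exists_mem_ne hG z
  obtain ⟨t, ht, hstwzx⟩ := exists_mem_notMem_of_card_lt_card
    ((card_le_four (a := s) (b := w) (c := z) (d := x)).trans_lt hE)
  simp only [mem_insert, mem_singleton, not_or] at hstwzx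
  obtain ⟨hts, htw, htz, htx⟩ := hstwzx
  exact ⟨t, ht, hts, x, hx, w, hwF, z, hz, ne_of_mem_of_not_mem hx hwG, hxz, hzw.symm,
    Ne.symm htx, Ne.symm htw, hws, Ne.symm htz, hzs⟩

theorem exists_triangleExtends_of_mem_union_sdiff (hE : 5 ≤ #E) (hF : 3 ≤ #F) (hG : 2 ≤ #G)
    (hH : 3 ≤ #H) (hw : w ∈ F ∪ H) (hwG : w ∉ G) (hws : w ≠ s) :
    ∃ t ∈ E, t ≠ s ∧ TriangleExtends G F H t s := by
  rcases mem_union.1 hw with hwF | hwH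
  · exact exists_triangleExtends_of_mem_sdiff hE hG hH hwF hwG hws
  · obtain ⟨t, ht, hts, h⟩ := exists_triangleExtends_of_mem_sdiff hE hG hF hwH hwG hws
    exact ⟨t, ht, hts, h.swap⟩

theorem triangleExtends_insert (hG : 2 ≤ #G) (hvG : v ∉ G) (hsv : s ≠ v) (ht : t ∉ insert v G) :
    TriangleExtends G (insert v G) (insert v G) t s := by
  obtain ⟨z, hz, hzs⟩ := exists_mem_ne hG s
  obtain ⟨x, hx, hxz⟩ := exists_mem_ne hG z
  simp only [mem_insert, not_or] at ht
  exact ⟨x, hx, v, mem_insert_self v G, z, mem_insert_of_mem hz, ne_of_mem_of_not_mem hx hvG,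
    hxz, (ne_of_mem_of_not_mem hz hvG).symm, ne_of_mem_of_not_mem hx ht.2, Ne.symm ht.1,
    hsv.symm, ne_of_mem_of_not_mem hz ht.2, hzs⟩

end Triangle

section Bridge

variable {α : Type*} {A B C D E F G H : Finset α}

/-- The lists of `v₁, …, v₈` are `A, …, H`; `s, t` are the colours of the bridge `v₄v₅`. -/
def BridgeExtends (A B C D E F G H : Finset α) : Prop :=
  ∃ s ∈ D, ∃ t ∈ E, s ≠ t ∧ TriangleExtends A B C s t ∧ TriangleExtends G F H t s

variable [DecidableEq α]

theorem bridgeExtends_of_forall (hE : 5 ≤ #E) (hF : 3 ≤ #F) (hG : 2 ≤ #G) (hH : 3 ≤ #H)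
    {s : α} (hsD : s ∈ D) (hW : ∃ w ∈ F ∪ H, w ∉ G ∧ w ≠ s)
    (hl : ∀ t, TriangleExtends A B C s t) : BridgeExtends A B C D E F G H := by
  obtain ⟨w, hw, hwG, hws⟩ := hW
  obtain ⟨t, htE, hts, hr⟩ :=
    exists_triangleExtends_of_mem_union_sdiff hE hF hG hH hw hwG hws
  exact ⟨s, hsD, t, htE, hts.symm, hl t, hr⟩

theorem bridgeExtends_of_one_lt_card (hE : 5 ≤ #E) (hF : 3 ≤ #F) (hG : 2 ≤ #G) (hH : 3 ≤ #H)
    {w : α} (hwF : w ∈ F) (hwG : w ∉ G) {S : Finset α} (hSD : S ⊆ D) (hS : 1 < #S)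
    (hl : ∀ s ∈ S, ∀ t, TriangleExtends A B C s t) : BridgeExtends A B C D E F G H := by
  obtain ⟨s, hs, hsw⟩ := exists_mem_ne hS w
  exact bridgeExtends_of_forall hE hF hG hH (hSD hs) ⟨w, mem_union_left H hwF, hwG, hsw.symm⟩
    (hl s hs)

theorem bridgeExtends_insert (hA : #A = 3) (hB : #B = 3) (hD : #D = 5) (hE : #E = 5)
    (hG : #G = 2) {v : α} (hvG : v ∉ G) (hDv : ∀ s ∈ D, s ∉ A → s ∉ B → s = v) :
    BridgeExtends A B B D E (insert v G) G (insert v G) := by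
  have hvG3 : #(insert v G) = 3 := by rw [card_insert_of_notMem hvG, hG]
  obtain ⟨q, hq, hqv⟩ := exists_mem_ne (s := D \ A) (by have := le_card_sdiff A D; omega) v
  obtain ⟨hqD, hqA⟩ := mem_sdiff.1 hq
  have hqB : q ∈ B := by_contra fun hqB => hqv (hDv q hqD hqA hqB)
  obtain ⟨p, hp, hpv⟩ := exists_mem_ne (s := D \ B) (by have := le_card_sdiff B D; omega) v
  obtain ⟨hpD, hpB⟩ := mem_sdiff.1 hp
  by_cases hEB : ∃ t ∈ E, t ∉ insert v G ∧ t ∉ B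
  · obtain ⟨t, htE, htvG, htB⟩ := hEB
    refine ⟨q, hqD, t, htE, ne_of_mem_of_not_mem hqB htB, ?_,
      triangleExtends_insert hG.ge hvG hqv htvG⟩
    exact triangleExtends_of_notMem hA.ge hB.ge hB.ge hqA
      (by rw [union_self, pair_comm]; exact two_le_card_sdiff_pair hB.ge htB q)
  · push Not at hEB
    obtain ⟨t, ht, htq⟩ := exists_mem_ne (s := E \ insert v G)
      (by have := le_card_sdiff (insert v G) E; omega) q
    obtain ⟨htE, htvG⟩ := mem_sdiff.1 ht
    exact ⟨p, hpD, t, htE, (ne_of_mem_of_not_mem (hEB t htE htvG) hpB).symm,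
      triangleExtends_of_mem_sdiff hA.ge hB.ge hpB hqB hqA htq.symm,
      triangleExtends_insert hG.ge hvG hpv htvG⟩

theorem bridgeExtends_of_ne (hA : #A = 3) (hB : #B = 3) (hC : #C = 3) (hD : #D = 5)
    (hE : #E = 5) (hF : #F = 3) (hG : #G = 2) (hH : #H = 3) (hBC : B ≠ C) :
    BridgeExtends A B C D E F G H := by
  obtain ⟨w, hwF, hwG⟩ := exists_mem_notMem_of_card_lt_card (s := G) (t := F) (by omega)
  refine bridgeExtends_of_one_lt_card hE.ge hF.ge hG.ge hH.ge hwF hwG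
    (sdiff_subset : D \ A ⊆ D) (by have := le_card_sdiff A D; omega) fun s hs t => ?_
  have := card_lt_card_union_of_ne (hB.trans hC.symm) hBC
  have := le_card_sdiff {s, t} (B ∪ C)
  have : #({s, t} : Finset α) ≤ 2 := card_le_two
  exact triangleExtends_of_notMem hA.ge hB.ge hC.ge (mem_sdiff.1 hs).2 (by omega)

theorem bridgeExtends_same (hA : #A = 3) (hB : #B = 3) (hD : #D = 5) (hE : #E = 5)
    (hF : #F = 3) (hG : #G = 2) (hH : #H = 3) : BridgeExtends A B B D E F G H := by
  obtain ⟨w, hwF, hwG⟩ := exists_mem_notMem_of_card_lt_card (s := G) (t := F) (by omega)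
  by_cases hgood : ∃ s ∈ D, s ∉ A ∧ s ∉ B ∧ ∃ w ∈ F ∪ H, w ∉ G ∧ w ≠ s
  · obtain ⟨s, hsD, hsA, hsB, hW⟩ := hgood
    exact bridgeExtends_of_forall hE.ge hF.ge hG.ge hH.ge hsD hW fun t =>
      triangleExtends_of_notMem hA.ge hB.ge hB.ge hsA
        (by rw [union_self]; exact two_le_card_sdiff_pair hB.ge hsB t)
  by_cases hBA : 1 < #(B \ A)
  · refine bridgeExtends_of_one_lt_card hE.ge hF.ge hG.ge hH.ge hwF hwG
      (sdiff_subset : D \ B ⊆ D) (by have := le_card_sdiff B D; omega) fun s hs t => ?_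
    obtain ⟨q, hq, hqt⟩ := exists_mem_ne hBA t
    exact triangleExtends_of_mem_sdiff hA.ge hB.ge (mem_sdiff.1 hs).2 (mem_sdiff.1 hq).1
      (mem_sdiff.1 hq).2 hqt
  push Not at hgood
  obtain ⟨v, hv⟩ : (D \ (A ∪ B)).Nonempty := by
    have hAB := card_sdiff_add_card B A
    rw [union_comm] at hAB
    have := le_card_sdiff (A ∪ B) D
    exact card_pos.1 (by omega)
  simp only [mem_sdiff, mem_union, not_or] at hv
  have hbad := hgood v hv.1 hv.2.1 hv.2.2
  have hFH : F ∪ H ⊆ insert v G := fun x hx =>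
    mem_insert.2 ((em (x ∈ G)).symm.imp (hbad x hx) id)
  obtain ⟨hvG, rfl⟩ := eq_insert_of_subset_insert (union_subset_left hFH) (by omega)
  obtain ⟨-, rfl⟩ := eq_insert_of_subset_insert (union_subset_right hFH) (by omega)
  have hwFH := mem_union_left (insert v G) hwF
  exact bridgeExtends_insert hA hB hD hE hG hvG fun s hsD hsA hsB =>
    (hgood s hsD hsA hsB w hwFH hwG).symm.trans (hbad w hwFH hwG)

end Bridge

theorem Jgraph_adj_iff {u v : Fin 8} : Jgraph.Adj u v ↔
    s(u, v) ∈ ({s(0, 1), s(0, 2), s(1, 3), s(2, 3), s(3, 4), s(4, 5), s(5, 6), s(6, 7), s(7, 4)} :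
      Finset (Sym2 (Fin 8))) ∧ u ≠ v := by
  simp [Jgraph]

instance : DecidableRel Jgraph.Adj := fun _ _ => decidable_of_iff _ Jgraph_adj_iff.symm

instance : DecidableRel (square Jgraph).Adj := fun _ _ => by unfold square; infer_instance

theorem square_Jgraph_adj : ∀ u v, (square Jgraph).Adj u v →
    s(u, v) ∈ ({s(0, 1), s(0, 2), s(0, 3), s(1, 2), s(1, 3), s(1, 4), s(2, 3), s(2, 4), s(3, 4),
      s(3, 5), s(3, 7), s(4, 5), s(4, 6), s(4, 7), s(5, 6), s(5, 7), s(6, 7)} :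
      Finset (Sym2 (Fin 8))) := by
  decide

theorem exists_square_Jgraph_coloring {L : Fin 8 → Finset ℕ}
    (h : BridgeExtends (L 0) (L 1) (L 2) (L 3) (L 4) (L 5) (L 6) (L 7)) :
    ∃ c : Fin 8 → ℕ, (∀ i, c i ∈ L i) ∧ ∀ u v, (square Jgraph).Adj u v → c u ≠ c v := by
  obtain ⟨s, hs, t, ht, hst, hl, hr⟩ := h
  obtain ⟨c0, h0, c1, h1, c2, h2, h01, h02, h12, h0s, h1s, h1t, h2s, h2t⟩ := hl
  obtain ⟨c6, h6, c5, h5, c7, h7, h65, h67, h57, h6t, h5t, h5s, h7t, h7s⟩ := hr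
  refine ⟨![c0, c1, c2, s, t, c5, c6, c7], fun i => by fin_cases i <;> assumption, ?_⟩
  intro u v huv
  have := square_Jgraph_adj u v huv
  simp only [mem_insert, mem_singleton, Sym2.eq_iff] at this
  rcases this with h | h | h | h | h | h | h | h | h | h | h | h | h | h | h | h | h <;>
    rcases h with ⟨rfl, rfl⟩ | ⟨rfl, rfl⟩ <;>
    simp only [Matrix.cons_val, Matrix.cons_val_zero, Matrix.cons_val_one] <;>
    first | assumption | exact Ne.symm ‹_›

/-- If the vertices of `J` carry lists with `|L(vᵢ)| = 3` for `i ∈ {1,2,3,6,8}`,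
`|L(v₄)| = |L(v₅)| = 5` and `|L(v₇)| = 2`, then the square `J²` has a proper
coloring from the lists. -/
theorem Jgraph_square_colorable_of_lists (L : Fin 8 → Finset ℕ)
    (h1 : (L 0).card = 3) (h2 : (L 1).card = 3) (h3 : (L 2).card = 3)
    (h6 : (L 5).card = 3) (h8 : (L 7).card = 3)
    (h4 : (L 3).card = 5) (h5 : (L 4).card = 5) (h7 : (L 6).card = 2) :
    ∃ c : Fin 8 → ℕ, (∀ i, c i ∈ L i) ∧
      ∀ u v, (square Jgraph).Adj u v → c u ≠ c v := by
  apply exists_square_Jgraph_coloring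
  rcases ne_or_eq (L 1) (L 2) with h12 | h12
  · exact bridgeExtends_of_ne h1 h2 h3 h4 h5 h6 h7 h8 h12
  · rw [← h12]
    exact bridgeExtends_same h1 h2 h4 h5 h6 h7 h8
end

section
/- In a vertex-minimal subcubic planar graph G without 5-cycles whose square is not 7-choosable, no 3-cycle shares an edge with a cycle of length at most 4. In particular, G contains no two triangles sharing an edge and no triangle sharing an edge with a 4-cycle. -/
open SimpleGraph

/-- A graph is `k`-choosable if for every assignment of lists (of colors) of size `k`
to the vertices there is a proper coloring choosing each vertex's color from its list. -/
def Choosable {V : Type} (G : SimpleGraph V) (k : ℕ) : Prop :=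
  ∀ L : V → Finset ℕ, (∀ v, (L v).card = k) →
    ∃ c : V → ℕ, (∀ v, c v ∈ L v) ∧ ∀ u v, G.Adj u v → c u ≠ c v

/-- A graph is subcubic if every vertex has degree at most 3. -/
def Subcubic {V : Type} (G : SimpleGraph V) : Prop :=
  ∀ v : V, (G.neighborSet v).ncard ≤ 3

/-- A graph has no 5-cycles. -/
def NoFiveCycle {V : Type} (G : SimpleGraph V) : Prop :=
  ∀ (v : V) (w : G.Walk v v), w.IsCycle → w.length ≠ 5

/-- `H` is a minor of `G`: there are nonempty, pairwise disjoint, connected branch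
sets in `G`, one for each vertex of `H`, with an edge of `G` between the branch sets
of any two adjacent vertices of `H`. -/
def IsMinor {V W : Type} (G : SimpleGraph V) (H : SimpleGraph W) : Prop :=
  ∃ f : W → Set V,
    (∀ w, (f w).Nonempty) ∧
    (∀ w, (G.induce (f w)).Connected) ∧
    (∀ w₁ w₂, w₁ ≠ w₂ → Disjoint (f w₁) (f w₂)) ∧
    (∀ w₁ w₂, H.Adj w₁ w₂ → ∃ a ∈ f w₁, ∃ b ∈ f w₂, G.Adj a b)

/-- Planarity, via Wagner's characterization: no `K₅` minor and no `K₃,₃` minor. -/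
def Planar {V : Type} (G : SimpleGraph V) : Prop :=
  ¬ IsMinor G (completeGraph (Fin 5)) ∧
  ¬ IsMinor G (completeBipartiteGraph (Fin 3) (Fin 3))

/-!
A triangle `uva` sharing the edge `uv` with a triangle or a 4-cycle either closes a 5-cycle or
yields a diamond: two triangles `uva`, `ucv` on the common edge `uv`. In a diamond the vertex `u`
has at most five neighbours in `G²`, and since `v` is adjacent to the other two neighbours of `u`,
deleting `u` destroys no distance-two pair of the remaining vertices. So a list colouring of the
square of `G - u`, which exists by minimality, is proper on `G² - u` and extends to `u`.
-/

variable {V W : Type}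

section Inheritance

variable {G : SimpleGraph V} {G' : SimpleGraph W}

lemma IsMinor.of_embedding {U : Type} {H : SimpleGraph U} (φ : G' ↪g G) (h : IsMinor G' H) :
    IsMinor G H := by
  obtain ⟨f, hne, hconn, hdisj, hedge⟩ := h
  refine ⟨fun w => φ '' f w, fun w => (hne w).image φ, fun w => ?_,
    fun w₁ w₂ hw => (Set.disjoint_image_iff φ.injective).2 (hdisj w₁ w₂ hw), fun w₁ w₂ hw => ?_⟩
  · let ψ : G'.induce (f w) →g G.induce (φ '' f w) :=
      ⟨fun z => ⟨φ z, Set.mem_image_of_mem φ z.2⟩, fun h => φ.map_adj_iff.2 h⟩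
    exact (hconn w).map ψ (by rintro ⟨_, z, hz, rfl⟩; exact ⟨⟨z, hz⟩, rfl⟩)
  · obtain ⟨a, ha, b, hb, hab⟩ := hedge w₁ w₂ hw
    exact ⟨φ a, Set.mem_image_of_mem φ ha, φ b, Set.mem_image_of_mem φ hb, φ.map_adj_iff.2 hab⟩

lemma Planar.of_embedding (φ : G' ↪g G) (hG : Planar G) : Planar G' :=
  ⟨fun h => hG.1 (h.of_embedding φ), fun h => hG.2 (h.of_embedding φ)⟩

lemma Subcubic.of_embedding [Finite V] (φ : G' ↪g G) (hG : Subcubic G) : Subcubic G' := fun w =>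
  (Set.ncard_le_ncard_of_injOn φ (fun _ hx => φ.map_adj_iff.2 hx) φ.injective.injOn).trans
    (hG (φ w))

lemma NoFiveCycle.of_embedding (φ : G' ↪g G) (hG : NoFiveCycle G) : NoFiveCycle G' :=
  fun v w hw hlen => hG (φ v) (w.map φ.toHom) (hw.map φ.injective) (by simpa using hlen)

end Inheritance

lemma exists_embedding_fin_range_eq_compl [Fintype V] (u : V) :
    ∃ n < Fintype.card V, ∃ ι : Fin n ↪ V, Set.range ι = {u}ᶜ := by
  classical
  let e := (Fintype.equivFin {x : V // x ≠ u}).symm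
  refine ⟨_, Fintype.card_subtype_lt (x := u) (by simp),
    e.toEmbedding.trans (Function.Embedding.subtype _), ?_⟩
  ext x
  simpa using ⟨fun ⟨i, hi⟩ => hi ▸ (e i).2, fun hx => ⟨e.symm ⟨x, hx⟩, by simp⟩⟩

lemma Choosable.of_comap_le [Finite V] {H : SimpleGraph V} {H' : SimpleGraph W} {ι : W → V}
    {u : V} {k : ℕ} (hH' : Choosable H' k) (hle : H.comap ι ≤ H') (hrange : {u}ᶜ ⊆ Set.range ι)
    (hdeg : (H.neighborSet u).ncard < k) : Choosable H k := by
  classical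
  intro L hL
  obtain ⟨c', hc'L, hc'adj⟩ := hH' (L ∘ ι) (fun w => hL (ι w))
  choose pick hpick using fun x (hx : x ≠ u) => hrange hx
  let c : V → ℕ := fun x => if h : x = u then 0 else c' (pick x h)
  have hc : ∀ x (h : x ≠ u), c x = c' (pick x h) := fun x h => dif_neg h
  obtain ⟨col, hcolL, hcol⟩ : ∃ col ∈ L u, col ∉ c '' H.neighborSet u := by
    refine Set.exists_mem_notMem_of_ncard_lt_ncard ?_
    calc (c '' H.neighborSet u).ncard ≤ (H.neighborSet u).ncard := Set.ncard_image_le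
      _ < k := hdeg
      _ = (L u : Set ℕ).ncard := by rw [Set.ncard_coe_finset, hL]
  have hcol_ne : ∀ y, H.Adj u y → col ≠ Function.update c u col y := fun y hy => by
    rw [Function.update_of_ne hy.ne']
    exact fun h => hcol ⟨y, hy, h.symm⟩
  refine ⟨Function.update c u col, fun x => ?_, fun x y hxy => ?_⟩
  · rcases eq_or_ne x u with rfl | hx
    · simpa
    · rw [Function.update_of_ne hx, hc x hx]
      simpa [hpick] using hc'L (pick x hx)
  rcases eq_or_ne x u with rfl | hx
  · simpa using hcol_ne y hxy
  rcases eq_or_ne y u with rfl | hy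
  · simpa using (hcol_ne x hxy.symm).symm
  rw [Function.update_of_ne hx, Function.update_of_ne hy, hc x hx, hc y hy]
  exact hc'adj _ _ (hle (by simpa [hpick] using hxy))

lemma comap_square_le_square_comap {G : SimpleGraph V} {ι : W → V} {u : V}
    (hrange : {u}ᶜ ⊆ Set.range ι)
    (hN : ∀ x y, G.Adj u x → G.Adj u y → x ≠ y → G.Adj x y ∨ ∃ w ≠ u, G.Adj x w ∧ G.Adj w y) :
    (square G).comap ι ≤ square (G.comap ι) := by
  rintro i j ⟨hij, hdist⟩
  have hne : i ≠ j := fun h => hij (congrArg ι h)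
  have hdist' : G.Adj (ι i) (ι j) ∨ ∃ w ≠ u, G.Adj (ι i) w ∧ G.Adj w (ι j) := by
    rcases hdist with h | ⟨w, hiw, hwj⟩
    · exact Or.inl h
    rcases eq_or_ne w u with rfl | hw
    · exact hN _ _ hiw.symm hwj hij
    · exact Or.inr ⟨w, hw, hiw, hwj⟩
  rcases hdist' with h | ⟨w, hw, hiw, hwj⟩
  · exact ⟨hne, Or.inl h⟩
  · obtain ⟨k, rfl⟩ := hrange hw
    exact ⟨hne, Or.inr ⟨k, hiw, hwj⟩⟩

lemma Subcubic.neighborSet_eq [Finite V] {G : SimpleGraph V} (hG : Subcubic G) {u x y z : V}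
    (hx : G.Adj u x) (hy : G.Adj u y) (hz : G.Adj u z) (hxy : x ≠ y) (hxz : x ≠ z) (hyz : y ≠ z) :
    G.neighborSet u = {x, y, z} :=
  (Set.eq_of_subset_of_ncard_le (by rintro _ (rfl | rfl | rfl) <;> assumption)
    ((hG u).trans (Set.ncard_eq_three.2 ⟨x, y, z, hxy, hxz, hyz, rfl⟩).ge)).symm

lemma Subcubic.ncard_neighborSet_diff_pair_le [Finite V] {G : SimpleGraph V} (hG : Subcubic G)
    {u x y : V} (hx : G.Adj u x) (hy : G.Adj u y) (hxy : x ≠ y) :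
    (G.neighborSet u \ {x, y}).ncard ≤ 1 := by
  have hpair : ({x, y} : Set V) ⊆ G.neighborSet u := by rintro _ (rfl | rfl) <;> assumption
  have := hG u
  rw [Set.ncard_sdiff hpair, Set.ncard_pair hxy]
  omega

lemma NoFiveCycle.not_adj_of_path {G : SimpleGraph V} (hG : NoFiveCycle G) {x₀ x₁ x₂ x₃ x₄ : V}
    (h₀₁ : G.Adj x₀ x₁) (h₁₂ : G.Adj x₁ x₂) (h₂₃ : G.Adj x₂ x₃) (h₃₄ : G.Adj x₃ x₄)
    (h₀₂ : x₀ ≠ x₂) (h₀₃ : x₀ ≠ x₃) (h₀₄ : x₀ ≠ x₄) (h₁₃ : x₁ ≠ x₃) (h₁₄ : x₁ ≠ x₄)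
    (h₂₄ : x₂ ≠ x₄) : ¬ G.Adj x₄ x₀ := fun h₄₀ => by
  refine hG x₀ (.cons h₀₁ (.cons h₁₂ (.cons h₂₃ (.cons h₃₄ (.cons h₄₀ .nil))))) ?_ rfl
  rw [Walk.cons_isCycle_iff]
  grind [Walk.cons_isPath_iff, Walk.IsPath.nil, Walk.support_cons, Walk.support_nil,
    Walk.edges_cons, Walk.edges_nil, Sym2.eq_iff, Adj.ne]

namespace SimpleGraph.Walk

variable {G : SimpleGraph V} {x u v : V}

lemma exists_triangle_of_length_eq_three {c : G.Walk x x} (hc : c.length = 3)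
    (he : s(u, v) ∈ c.edges) :
    ∃ a, G.Adj v a ∧ G.Adj a u ∧ ∀ e, e ∈ c.edges ↔ e = s(u, v) ∨ e = s(v, a) ∨ e = s(a, u) := by
  rcases c with _ | ⟨h₁, _ | ⟨h₂, _ | ⟨h₃, _ | ⟨_, _⟩⟩⟩⟩ <;>
    simp only [length_cons, length_nil] at hc <;> try omega
  simp only [edges_cons, edges_nil, List.mem_cons, List.not_mem_nil, or_false] at he ⊢
  rcases he with he | he | he <;> rw [Sym2.eq_iff] at he <;>
    rcases he with ⟨rfl, rfl⟩ | ⟨rfl, rfl⟩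
  exacts [⟨_, h₂, h₃, fun _ => by grind [Sym2.eq_swap]⟩,
    ⟨_, h₃.symm, h₂.symm, fun _ => by grind [Sym2.eq_swap]⟩,
    ⟨_, h₃, h₁, fun _ => by grind [Sym2.eq_swap]⟩,
    ⟨_, h₁.symm, h₃.symm, fun _ => by grind [Sym2.eq_swap]⟩,
    ⟨_, h₁, h₂, fun _ => by grind [Sym2.eq_swap]⟩,
    ⟨_, h₂.symm, h₁.symm, fun _ => by grind [Sym2.eq_swap]⟩]

lemma IsCycle.exists_of_length_eq_four {c : G.Walk x x} (hc : c.IsCycle) (hl : c.length = 4)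
    (he : s(u, v) ∈ c.edges) :
    ∃ p q, G.Adj v p ∧ G.Adj p q ∧ G.Adj q u ∧ u ≠ p ∧ v ≠ q := by
  rcases c with _ | ⟨h₁, _ | ⟨h₂, _ | ⟨h₃, _ | ⟨h₄, _ | ⟨_, _⟩⟩⟩⟩⟩ <;>
    simp only [length_cons, length_nil] at hl <;> try omega
  have hnodup := hc.support_nodup
  simp only [support_cons, support_nil, List.tail_cons, List.nodup_cons, List.mem_cons,
    List.not_mem_nil, or_false, not_or] at hnodup
  simp only [edges_cons, edges_nil, List.mem_cons, List.not_mem_nil, or_false] at he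
  rcases he with he | he | he | he <;> rw [Sym2.eq_iff] at he <;>
    rcases he with ⟨rfl, rfl⟩ | ⟨rfl, rfl⟩
  exacts [⟨_, _, h₂, h₃, h₄, by grind⟩, ⟨_, _, h₄.symm, h₃.symm, h₂.symm, by grind⟩,
    ⟨_, _, h₃, h₄, h₁, by grind⟩, ⟨_, _, h₁.symm, h₄.symm, h₃.symm, by grind⟩,
    ⟨_, _, h₄, h₁, h₂, by grind⟩, ⟨_, _, h₂.symm, h₁.symm, h₄.symm, by grind⟩,
    ⟨_, _, h₁, h₂, h₃, by grind⟩, ⟨_, _, h₃.symm, h₂.symm, h₁.symm, by grind⟩]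

end SimpleGraph.Walk

def ChoosableSquareBelow (N : ℕ) : Prop :=
  ∀ n < N, ∀ G : SimpleGraph (Fin n), Subcubic G → Planar G → NoFiveCycle G →
    Choosable (square G) 7

section MinimalCounterexample

variable [Fintype V] {G : SimpleGraph V}

lemma choosable_square_of_reducible_vertex (hsub : Subcubic G) (hpl : Planar G)
    (h5 : NoFiveCycle G) (hmin : ChoosableSquareBelow (Fintype.card V)) {u : V}
    (hdeg : ((square G).neighborSet u).ncard < 7)
    (hN : ∀ x y, G.Adj u x → G.Adj u y → x ≠ y → G.Adj x y ∨ ∃ w ≠ u, G.Adj x w ∧ G.Adj w y) :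
    Choosable (square G) 7 := by
  obtain ⟨n, hn, ι, hrange⟩ := exists_embedding_fin_range_eq_compl u
  have φ := Embedding.comap ι G
  exact (hmin n hn _ (hsub.of_embedding φ) (hpl.of_embedding φ) (h5.of_embedding φ)).of_comap_le
    (comap_square_le_square_comap hrange.ge hN) hrange.ge hdeg

lemma choosable_square_of_diamond (hsub : Subcubic G) (hpl : Planar G) (h5 : NoFiveCycle G)
    (hmin : ChoosableSquareBelow (Fintype.card V)) {u v a c : V} (huv : G.Adj u v)
    (hva : G.Adj v a) (hau : G.Adj a u) (hvc : G.Adj v c) (hcu : G.Adj c u) (hac : a ≠ c) :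
    Choosable (square G) 7 := by
  have hNu := hsub.neighborSet_eq huv hau.symm hcu.symm hva.ne hvc.ne hac
  have hNv := hsub.neighborSet_eq huv.symm hva hvc hau.ne' hcu.ne' hac
  have hv : ∀ x, G.Adj u x → x ≠ v → G.Adj v x := by
    intro x hx hxv
    rw [← mem_neighborSet, hNu] at hx
    rcases hx with rfl | rfl | rfl
    exacts [absurd rfl hxv, hva, hvc]
  have hsq : (square G).neighborSet u ⊆
      G.neighborSet u ∪ (G.neighborSet a \ {u, v}) ∪ (G.neighborSet c \ {u, v}) := by
    rintro x ⟨hxu, hx | ⟨w, huw, hwx⟩⟩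
    · exact Or.inl (Or.inl hx)
    rw [← mem_neighborSet, hNu] at huw
    rcases huw with rfl | rfl | rfl
    · rw [← mem_neighborSet, hNv] at hwx
      rcases hwx with rfl | rfl | rfl
      exacts [absurd rfl hxu, Or.inl (Or.inl hau.symm), Or.inl (Or.inl hcu.symm)]
    all_goals rcases eq_or_ne x v with rfl | hxv
    all_goals first
      | exact Or.inl (Or.inl huv)
      | exact Or.inl (Or.inr ⟨hwx, by simp [hxu.symm, hxv]⟩)
      | exact Or.inr ⟨hwx, by simp [hxu.symm, hxv]⟩
  refine choosable_square_of_reducible_vertex hsub hpl h5 hmin (u := u) ?_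
    fun x y hx hy hxy => ?_
  · calc ((square G).neighborSet u).ncard
        ≤ (G.neighborSet u ∪ (G.neighborSet a \ {u, v}) ∪ (G.neighborSet c \ {u, v})).ncard :=
          Set.ncard_le_ncard hsq
      _ ≤ (G.neighborSet u).ncard + (G.neighborSet a \ {u, v}).ncard
          + (G.neighborSet c \ {u, v}).ncard :=
          (Set.ncard_union_le _ _).trans (Nat.add_le_add_right (Set.ncard_union_le _ _) _)
      _ ≤ 3 + 1 + 1 := by
          gcongr
          exacts [hsub u, hsub.ncard_neighborSet_diff_pair_le hau hva.symm huv.ne,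
            hsub.ncard_neighborSet_diff_pair_le hcu hvc.symm huv.ne]
      _ < 7 := by norm_num
  rcases eq_or_ne x v with rfl | hxv
  · exact Or.inl (hv y hy hxy.symm)
  rcases eq_or_ne y v with rfl | hyv
  · exact Or.inl (hv x hx hxv).symm
  exact Or.inr ⟨v, huv.ne', (hv x hx hxv).symm, hv y hy hyv⟩

lemma choosable_square_of_triangle_of_fourCycle (hsub : Subcubic G) (hpl : Planar G)
    (h5 : NoFiveCycle G) (hmin : ChoosableSquareBelow (Fintype.card V)) {u v a p q : V}
    (huv : G.Adj u v) (hva : G.Adj v a) (hau : G.Adj a u) (hvp : G.Adj v p) (hpq : G.Adj p q)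
    (hqu : G.Adj q u) (hup : u ≠ p) (hvq : v ≠ q) : Choosable (square G) 7 := by
  rcases eq_or_ne a p with rfl | hap
  · exact choosable_square_of_diamond hsub hpl h5 hmin hau.symm hva.symm huv.symm hpq hqu hvq
  rcases eq_or_ne a q with rfl | haq
  · exact choosable_square_of_diamond hsub hpl h5 hmin hva hau huv hpq.symm hvp.symm hup
  exact (h5.not_adj_of_path hau hqu.symm hpq.symm hvp.symm haq hap hva.ne' hup huv.ne
    hvq.symm hva).elim

end MinimalCounterexample

/-- In a vertex-minimal subcubic planar graph without 5-cycles whose square is not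
7-choosable, no 3-cycle shares an edge with a cycle of length at most 4. -/
theorem minimal_counterexample_no_triangle_sharing_edge_with_short_cycle
    {V : Type} [Fintype V] (G : SimpleGraph V)
    (hsub : Subcubic G) (hpl : Planar G) (h5 : NoFiveCycle G)
    (hnot : ¬ Choosable (square G) 7)
    (hmin : ∀ (n : ℕ), n < Fintype.card V → ∀ G' : SimpleGraph (Fin n),
      Subcubic G' → Planar G' → NoFiveCycle G' → Choosable (square G') 7) :
    ¬ ∃ (x y : V) (c₁ : G.Walk x x) (c₂ : G.Walk y y),
      c₁.IsCycle ∧ c₂.IsCycle ∧ c₁.length = 3 ∧ c₂.length ≤ 4 ∧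
      {e | e ∈ c₁.edges} ≠ {e | e ∈ c₂.edges} ∧
      ∃ e, e ∈ c₁.edges ∧ e ∈ c₂.edges := by
  rintro ⟨x, y, c₁, c₂, -, hc₂, hl₁, hl₂, hne, e, he₁, he₂⟩
  obtain ⟨u, v⟩ := e
  have huv := c₁.adj_of_mem_edges he₁
  obtain ⟨a, hva, hau, hedges₁⟩ := Walk.exists_triangle_of_length_eq_three hl₁ he₁
  apply hnot
  rcases (by have := hc₂.three_le_length; omega : c₂.length = 3 ∨ c₂.length = 4) with hl₂ | hl₂
  · obtain ⟨b, hvb, hbu, hedges₂⟩ := Walk.exists_triangle_of_length_eq_three hl₂ he₂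
    refine choosable_square_of_diamond hsub hpl h5 hmin huv hva hau hvb hbu ?_
    rintro rfl
    exact hne (Set.ext fun e => (hedges₁ e).trans (hedges₂ e).symm)
  · obtain ⟨p, q, hvp, hpq, hqu, hup, hvq⟩ := hc₂.exists_of_length_eq_four hl₂ he₂
    exact choosable_square_of_triangle_of_fourCycle hsub hpl h5 hmin huv hva hau hvp hpq hqu
      hup hvq
end

section
/- In a vertex-minimal subcubic planar graph G without 5-cycles whose square is not 7-choosable, no 6-cycle of G contains a vertex of degree 2. -/
open SimpleGraph

section KeyLemma

variable {V : Type} [Fintype V] {G : SimpleGraph V}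

lemma no_five (h5 : NoFiveCycle G) {a b c d e : V}
    (hab : G.Adj a b) (hbc : G.Adj b c) (hcd : G.Adj c d) (hde : G.Adj d e)
    (hea : G.Adj e a)
    (nab : a ≠ b) (nac : a ≠ c) (nad : a ≠ d) (nae : a ≠ e) (nbc : b ≠ c)
    (nbd : b ≠ d) (nbe : b ≠ e) (ncd : c ≠ d) (nce : c ≠ e) (nde : d ≠ e) : False := by
  let w : G.Walk a a :=
    Walk.cons hab (Walk.cons hbc (Walk.cons hcd (Walk.cons hde (Walk.cons hea Walk.nil))))
  apply h5 a w ?_ (by simp [w])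
  rw [Walk.isCycle_def, Walk.isTrail_def]
  refine ⟨?_, by simp [w], ?_⟩
  · show List.Nodup [s(a,b), s(b,c), s(c,d), s(d,e), s(e,a)]
    simp [List.nodup_cons, Sym2.eq_iff]
    tauto
  · show List.Nodup [b, c, d, e, a]
    simp [List.nodup_cons]
    tauto

lemma ncard_diff2_le {s : Set V} {a b : V} (ha : a ∈ s) (hb : b ∈ s) (hab : a ≠ b)
    (h3 : s.ncard ≤ 3) : (s \ {a, b}).ncard ≤ 1 := by
  have hsub : ({a, b} : Set V) ⊆ s := by rintro x (rfl | rfl) <;> assumption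
  rw [Set.ncard_diff hsub]
  have : ({a, b} : Set V).ncard = 2 := Set.ncard_pair hab
  omega

lemma ncard_diff1_le {s : Set V} {a : V} (ha : a ∈ s) (h3 : s.ncard ≤ 3) :
    (s \ {a}).ncard ≤ 2 := by
  have hsub : ({a} : Set V) ⊆ s := by rintro x rfl; exact ha
  rw [Set.ncard_diff hsub]
  simp
  omega

lemma nbr_eq_pair {v a b : V} (h : (G.neighborSet v).ncard = 2)
    (ha : G.Adj v a) (hb : G.Adj v b) (hab : a ≠ b) : G.neighborSet v = {a, b} := by
  refine (Set.eq_of_subset_of_ncard_le ?_ ?_ (Set.toFinite _)).symm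
  · rintro x (rfl | rfl) <;> assumption
  · rw [h, Set.ncard_pair hab]

lemma nbr_eq_triple {v a b c : V} (h : (G.neighborSet v).ncard ≤ 3)
    (ha : G.Adj v a) (hb : G.Adj v b) (hc : G.Adj v c) (hab : a ≠ b) (hac : a ≠ c)
    (hbc : b ≠ c) : G.neighborSet v = {a, b, c} := by
  refine (Set.eq_of_subset_of_ncard_le ?_ ?_ (Set.toFinite _)).symm
  · rintro x (rfl | rfl | rfl) <;> assumption
  · have : ({a, b, c} : Set V).ncard = 3 := by
      rw [Set.ncard_insert_of_notMem (by simp [hab, hac]) (Set.toFinite _),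
        Set.ncard_pair hbc]
    omega

def OutNbr (G : SimpleGraph V) (S : Set V) (x : V) : Set V :=
  {u | u ∉ S ∧ (G.Adj x u ∨ ∃ w, G.Adj x w ∧ G.Adj w u)}

lemma obound2 (hsub : Subcubic G) (S : Set V) (x p q : V) (A B : Set V) {a b : ℕ}
    (hp : G.Adj x p) (hq : G.Adj x q) (hpq : p ≠ q)
    (hxS : x ∈ S) (hpS : p ∈ S) (hqS : q ∈ S)
    (hA : ∀ u, G.Adj p u → u ∉ S → u ∈ A) (hAc : A.ncard ≤ a)
    (hB : ∀ u, G.Adj q u → u ∉ S → u ∈ B) (hBc : B.ncard ≤ b) :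
    (OutNbr G S x).ncard ≤ a + b + 3 := by
  set T : Set V := G.neighborSet x \ {p, q} with hT
  have hT1 : T.ncard ≤ 1 := ncard_diff2_le hp hq hpq (hsub x)
  rcases Set.eq_empty_or_nonempty T with hTe | ⟨t, ht⟩
  · have hsub' : OutNbr G S x ⊆ A ∪ B := by
      rintro u ⟨huS, hadj | ⟨w, hw1, hw2⟩⟩
      · exfalso
        by_cases h1 : u = p
        · exact huS (h1 ▸ hpS)
        by_cases h2 : u = q
        · exact huS (h2 ▸ hqS)
        have : u ∈ T := by rw [hT]; exact ⟨hadj, by simp [h1, h2]⟩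
        rw [hTe] at this; exact this
      · by_cases h1 : w = p
        · exact Or.inl (hA u (h1 ▸ hw2) huS)
        by_cases h2 : w = q
        · exact Or.inr (hB u (h2 ▸ hw2) huS)
        exfalso
        have : w ∈ T := by rw [hT]; exact ⟨hw1, by simp [h1, h2]⟩
        rw [hTe] at this; exact this
    calc (OutNbr G S x).ncard ≤ (A ∪ B).ncard :=
          Set.ncard_le_ncard hsub' (Set.toFinite _)
      _ ≤ A.ncard + B.ncard := Set.ncard_union_le _ _
      _ ≤ a + b + 3 := by omega
  · have hTt : T = {t} := by
      refine Set.eq_singleton_iff_unique_mem.2 ⟨ht, fun y hy => ?_⟩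
      exact (Set.ncard_le_one (Set.toFinite _)).1 hT1 y hy t ht
    have hadjt : G.Adj x t := by
      have := ht; rw [hT] at this; exact this.1
    have hsub' : OutNbr G S x ⊆ A ∪ B ∪ ({t} ∪ (G.neighborSet t \ {x})) := by
      rintro u ⟨huS, hadj | ⟨w, hw1, hw2⟩⟩
      · by_cases h1 : u = p
        · exact absurd (h1 ▸ hpS) huS
        by_cases h2 : u = q
        · exact absurd (h2 ▸ hqS) huS
        have : u ∈ T := by rw [hT]; exact ⟨hadj, by simp [h1, h2]⟩
        rw [hTt] at this
        exact Or.inr (Or.inl this)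
      · by_cases h1 : w = p
        · exact Or.inl (Or.inl (hA u (h1 ▸ hw2) huS))
        by_cases h2 : w = q
        · exact Or.inl (Or.inr (hB u (h2 ▸ hw2) huS))
        have hwT : w ∈ T := by rw [hT]; exact ⟨hw1, by simp [h1, h2]⟩
        rw [hTt] at hwT
        rw [Set.mem_singleton_iff] at hwT
        subst hwT
        refine Or.inr (Or.inr ⟨hw2, ?_⟩)
        simp only [Set.mem_singleton_iff]
        intro h; exact huS (h ▸ hxS)
    calc (OutNbr G S x).ncard ≤ (A ∪ B ∪ ({t} ∪ (G.neighborSet t \ {x}))).ncard :=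
          Set.ncard_le_ncard hsub' (Set.toFinite _)
      _ ≤ (A ∪ B).ncard + ({t} ∪ (G.neighborSet t \ {x})).ncard := Set.ncard_union_le _ _
      _ ≤ a + b + 3 := by
          have h1 := Set.ncard_union_le A B
          have h2 := Set.ncard_union_le ({t} : Set V) (G.neighborSet t \ {x})
          have h3 : (G.neighborSet t \ {x}).ncard ≤ 2 :=
            ncard_diff1_le (by exact hadjt.symm) (hsub t)
          have h4 : ({t} : Set V).ncard = 1 := Set.ncard_singleton t
          omega

lemma obound0 (S : Set V) (x p q : V) (A B : Set V) {a b : ℕ}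
    (hpq : p ≠ q) (hpS : p ∈ S) (hqS : q ∈ S)
    (hA : ∀ u, G.Adj p u → u ∉ S → u ∈ A) (hAc : A.ncard ≤ a)
    (hB : ∀ u, G.Adj q u → u ∉ S → u ∈ B) (hBc : B.ncard ≤ b)
    (hT : ∀ t, G.Adj x t → t ≠ p → t ≠ q → t ∈ S ∧ ∀ u, G.Adj t u → u ∈ S) :
    (OutNbr G S x).ncard ≤ a + b := by
  have hsub' : OutNbr G S x ⊆ A ∪ B := by
    rintro u ⟨huS, hadj | ⟨w, hw1, hw2⟩⟩
    · exfalso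
      by_cases h1 : u = p
      · exact huS (h1 ▸ hpS)
      by_cases h2 : u = q
      · exact huS (h2 ▸ hqS)
      exact huS (hT u hadj h1 h2).1
    · by_cases h1 : w = p
      · exact Or.inl (hA u (h1 ▸ hw2) huS)
      by_cases h2 : w = q
      · exact Or.inr (hB u (h2 ▸ hw2) huS)
      exact absurd ((hT w hw1 h1 h2).2 u hw2) huS
  calc (OutNbr G S x).ncard ≤ (A ∪ B).ncard := Set.ncard_le_ncard hsub' (Set.toFinite _)
    _ ≤ A.ncard + B.ncard := Set.ncard_union_le _ _
    _ ≤ a + b := by omega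

end KeyLemma

lemma cardle2 (a b : ℕ) : ({a, b} : Finset ℕ).card ≤ 2 := by
  apply (Finset.card_insert_le _ _).trans; simp

lemma cardle3 (a b c : ℕ) : ({a, b, c} : Finset ℕ).card ≤ 3 := by
  apply (Finset.card_insert_le _ _).trans
  have := cardle2 b c; omega

lemma cardle4 (a b c d : ℕ) : ({a, b, c, d} : Finset ℕ).card ≤ 4 := by
  apply (Finset.card_insert_le _ _).trans
  have := cardle3 b c d; omega

open Finset in
theorem ext_FF (R2 R3 R4 R5 R6 : Finset ℕ) (w2 w3 w4 w5 w6 : ℕ)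
    (hR2 : 3 ≤ R2.card) (hR3 : 2 ≤ R3.card) (hR4 : 2 ≤ R4.card)
    (hR5 : 2 ≤ R5.card) (hR6 : 3 ≤ R6.card)
    (m2 : w2 ∈ R2) (m3 : w3 ∈ R3) (m4 : w4 ∈ R4) (m5 : w5 ∈ R5) (m6 : w6 ∈ R6)
    (d23 : w2 ≠ w3) (d24 : w2 ≠ w4) (d34 : w3 ≠ w4) (d35 : w3 ≠ w5)
    (d45 : w4 ≠ w5) (d46 : w4 ≠ w6) (d56 : w5 ≠ w6) :
    ∃ c2 c3 c4 c5 c6, c2 ∈ R2 ∧ c3 ∈ R3 ∧ c4 ∈ R4 ∧ c5 ∈ R5 ∧ c6 ∈ R6 ∧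
      c2 ≠ c3 ∧ c2 ≠ c4 ∧ c3 ≠ c4 ∧ c3 ≠ c5 ∧ c4 ≠ c5 ∧ c4 ≠ c6 ∧ c5 ≠ c6 ∧ c2 ≠ c6 := by
  by_cases h26 : w2 = w6
  case neg => exact ⟨w2, w3, w4, w5, w6, m2, m3, m4, m5, m6,
      d23, d24, d34, d35, d45, d46, d56, h26⟩
  subst h26
  -- branch 1
  by_cases hB1 : (R6 \ {w2, w4, w5}).Nonempty
  case pos =>
    obtain ⟨z, hz⟩ := hB1
    rw [mem_sdiff, mem_insert, mem_insert, mem_singleton] at hz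
    push_neg at hz
    obtain ⟨hzR, hz2, hz4, hz5⟩ := hz
    exact ⟨w2, w3, w4, w5, z, m2, m3, m4, m5, hzR,
      d23, d24, d34, d35, d45, fun h => hz4 h.symm, fun h => hz5 h.symm,
      fun h => hz2 h.symm⟩
  have hR6eq : R6 = {w2, w4, w5} := by
    have hsub : R6 ⊆ {w2, w4, w5} :=
      (sdiff_eq_empty_iff_subset).1 (not_nonempty_iff_eq_empty.1 hB1)
    refine Finset.eq_of_subset_of_card_le hsub ?_
    exact (cardle3 w2 w4 w5).trans hR6
  have m4R6 : w4 ∈ R6 := by rw [hR6eq]; simp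
  have m5R6 : w5 ∈ R6 := by rw [hR6eq]; simp
  -- branch 2
  by_cases hB2 : (R2 \ {w2, w3, w4}).Nonempty
  case pos =>
    obtain ⟨z, hz⟩ := hB2
    rw [mem_sdiff, mem_insert, mem_insert, mem_singleton] at hz
    push_neg at hz
    obtain ⟨hzR, hz2, hz3, hz4⟩ := hz
    exact ⟨z, w3, w4, w5, w2, hzR, m3, m4, m5, m6,
      hz3, hz4, d34, d35, d45, d46, d56, hz2⟩
  have hR2eq : R2 = {w2, w3, w4} := by
    have hsub : R2 ⊆ {w2, w3, w4} :=
      (sdiff_eq_empty_iff_subset).1 (not_nonempty_iff_eq_empty.1 hB2)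
    refine Finset.eq_of_subset_of_card_le hsub ?_
    exact (cardle3 w2 w3 w4).trans hR2
  have m3R2 : w3 ∈ R2 := by rw [hR2eq]; simp
  have m4R2 : w4 ∈ R2 := by rw [hR2eq]; simp
  -- branch 3
  by_cases hB3 : (R3 \ {w3, w4, w5}).Nonempty
  case pos =>
    obtain ⟨z, hz⟩ := hB3
    rw [mem_sdiff, mem_insert, mem_insert, mem_singleton] at hz
    push_neg at hz
    obtain ⟨hzR, hz3, hz4, hz5⟩ := hz
    exact ⟨w3, z, w4, w5, w2, m3R2, hzR, m4, m5, m6,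
      fun h => hz3 h.symm, d34, hz4, hz5, d45, d46, d56, d23.symm⟩
  have hR3sub : R3 ⊆ {w3, w4, w5} :=
    (sdiff_eq_empty_iff_subset).1 (not_nonempty_iff_eq_empty.1 hB3)
  -- branch 4
  by_cases hB4 : (R5 \ {w3, w4, w5}).Nonempty
  case pos =>
    obtain ⟨z, hz⟩ := hB4
    rw [mem_sdiff, mem_insert, mem_insert, mem_singleton] at hz
    push_neg at hz
    obtain ⟨hzR, hz3, hz4, hz5⟩ := hz
    exact ⟨w2, w3, w4, z, w5, m2, m3, m4, hzR, m5R6,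
      d23, d24, d34, fun h => hz3 h.symm, fun h => hz4 h.symm, d45, hz5,
      fun h => d56 h.symm⟩
  have hR5sub : R5 ⊆ {w3, w4, w5} :=
    (sdiff_eq_empty_iff_subset).1 (not_nonempty_iff_eq_empty.1 hB4)
  -- branch 5
  by_cases hB5 : (R4 \ {w2, w3, w4, w5}).Nonempty
  case pos =>
    obtain ⟨z, hz⟩ := hB5
    rw [mem_sdiff, mem_insert, mem_insert, mem_insert, mem_singleton] at hz
    push_neg at hz
    obtain ⟨hzR, hz2, hz3, hz4, hz5⟩ := hz
    exact ⟨w2, w3, z, w5, w4, m2, m3, hzR, m5, m4R6,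
      d23, fun h => hz2 h.symm, fun h => hz3 h.symm, d35, hz5, hz4, d45.symm, d24⟩
  have hR4sub : R4 ⊆ {w2, w3, w4, w5} :=
    (sdiff_eq_empty_iff_subset).1 (not_nonempty_iff_eq_empty.1 hB5)
  -- branch 6
  by_cases h6 : w5 ∈ R3 ∧ w3 ∈ R5
  case pos =>
    exact ⟨w3, w5, w4, w3, w5, m3R2, h6.1, m4, h6.2, m5R6,
      d35, d34, d45.symm, d35.symm, d34.symm, d45, d35, d35⟩
  -- auxiliary facts
  have hd1 : w5 ∉ R3 → w4 ∈ R3 := by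
    intro h5n
    have hsub : R3 ⊆ {w3, w4} := by
      intro z hz
      have := hR3sub hz
      simp only [mem_insert, mem_singleton] at this ⊢
      rcases this with h | h | h
      · exact Or.inl h
      · exact Or.inr h
      · exact absurd (h ▸ hz) h5n
    have : R3 = {w3, w4} := by
      refine Finset.eq_of_subset_of_card_le hsub ?_
      exact (cardle2 w3 w4).trans hR3
    rw [this]; simp
  have hd2 : w3 ∉ R5 → w4 ∈ R5 := by
    intro h3n
    have hsub : R5 ⊆ {w4, w5} := by
      intro z hz
      have := hR5sub hz
      simp only [mem_insert, mem_singleton] at this ⊢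
      rcases this with h | h | h
      · exact absurd (h ▸ hz) h3n
      · exact Or.inl h
      · exact Or.inr h
    have : R5 = {w4, w5} := by
      refine Finset.eq_of_subset_of_card_le hsub ?_
      exact (cardle2 w4 w5).trans hR5
    rw [this]; simp
  have hb4ex : (R4.erase w4).Nonempty := by
    rw [← Finset.card_pos, Finset.card_erase_of_mem m4]; omega
  obtain ⟨b4, hb4⟩ := hb4ex
  rw [Finset.mem_erase] at hb4
  obtain ⟨hb4ne, hb4R⟩ := hb4
  have hb4cases : b4 = w2 ∨ b4 = w3 ∨ b4 = w5 := by
    have := hR4sub hb4R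
    simp only [mem_insert, mem_singleton] at this
    tauto
  rcases hb4cases with hbe | hbe | hbe
  · -- b4 = w2
    rw [hbe] at hb4R
    by_cases hw4R5 : w4 ∈ R5
    · exact ⟨w4, w3, w2, w4, w5, m4R2, m3, hb4R, hw4R5, m5R6,
        d34.symm, d24.symm, d23.symm, d34, d24, fun h => d56 h.symm, d45, d45⟩
    · have hw4R3 : w4 ∈ R3 := by
        rcases not_and_or.1 h6 with h | h
        · exact hd1 h
        · exact absurd (hd2 h) hw4R5
      exact ⟨w3, w4, w2, w5, w4, m3R2, hw4R3, hb4R, m5, m4R6,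
        d34, d23.symm, d24.symm, d45, fun h => d56 h.symm, d24, d45.symm, d34⟩
  · -- b4 = w3
    rw [hbe] at hb4R
    by_cases hw4R3 : w4 ∈ R3
    · exact ⟨w2, w4, w3, w5, w4, m2, hw4R3, hb4R, m5, m4R6,
        d24, d23, d34.symm, d45, d35, d34, d45.symm, d24⟩
    · have hw5R3 : w5 ∈ R3 := by
        have hsub : R3 ⊆ {w3, w5} := by
          intro z hz
          have := hR3sub hz
          simp only [mem_insert, mem_singleton] at this ⊢
          rcases this with h | h | h
          · exact Or.inl h
          · exact absurd (h ▸ hz) hw4R3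
          · exact Or.inr h
        have : R3 = {w3, w5} := by
          refine Finset.eq_of_subset_of_card_le hsub ?_
          exact (cardle2 w3 w5).trans hR3
        rw [this]; simp
      have hw3nR5 : w3 ∉ R5 := fun h => h6 ⟨hw5R3, h⟩
      have hw4R5 : w4 ∈ R5 := hd2 hw3nR5
      exact ⟨w4, w5, w3, w4, w5, m4R2, hw5R3, hb4R, hw4R5, m5R6,
        d45, d34.symm, d35.symm, d45.symm, d34, d35, d45, d45⟩
  · -- b4 = w5
    rw [hbe] at hb4R
    by_cases hw4R5 : w4 ∈ R5
    · exact ⟨w4, w3, w5, w4, w2, m4R2, m3, hb4R, hw4R5, m6,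
        d34.symm, d45, d35, d34, d45.symm, d56, d46, d46⟩
    · have hw3R5 : w3 ∈ R5 := by
        have hsub : R5 ⊆ {w3, w5} := by
          intro z hz
          have := hR5sub hz
          simp only [mem_insert, mem_singleton] at this ⊢
          rcases this with h | h | h
          · exact Or.inl h
          · exact absurd (h ▸ hz) hw4R5
          · exact Or.inr h
        have : R5 = {w3, w5} := by
          refine Finset.eq_of_subset_of_card_le hsub ?_
          exact (cardle2 w3 w5).trans hR5
        rw [this]; simp
      have hw5nR3 : w5 ∉ R3 := fun h => h6 ⟨h, hw3R5⟩
      have hw4R3 : w4 ∈ R3 := hd1 hw5nR3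
      exact ⟨w3, w4, w5, w3, w4, m3R2, hw4R3, hb4R, hw3R5, m4R6,
        d34, d35, d45, d34.symm, d35.symm, d45.symm, d34, d34⟩

lemma sdiff4_nonempty (R : Finset ℕ) (a b c d : ℕ) (hR : 5 ≤ R.card) :
    (R \ {a, b, c, d}).Nonempty := by
  rw [← Finset.card_pos]
  have h1 := Finset.le_card_sdiff ({a,b,c,d} : Finset ℕ) R
  have h2 := cardle4 a b c d
  omega

open Finset in
theorem ext_TF (R2 R3 R4 R5 R6 : Finset ℕ) (w2 w3 w4 w5 w6 : ℕ)
    (hR5 : 5 ≤ R5.card) (hR6 : 3 ≤ R6.card)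
    (m2 : w2 ∈ R2) (m3 : w3 ∈ R3) (m4 : w4 ∈ R4) (m5 : w5 ∈ R5) (m6 : w6 ∈ R6)
    (d23 : w2 ≠ w3) (d24 : w2 ≠ w4) (d34 : w3 ≠ w4) (d35 : w3 ≠ w5)
    (d45 : w4 ≠ w5) (d46 : w4 ≠ w6) (d56 : w5 ≠ w6) (d25 : w2 ≠ w5) :
    ∃ c2 c3 c4 c5 c6, c2 ∈ R2 ∧ c3 ∈ R3 ∧ c4 ∈ R4 ∧ c5 ∈ R5 ∧ c6 ∈ R6 ∧
      c2 ≠ c3 ∧ c2 ≠ c4 ∧ c3 ≠ c4 ∧ c3 ≠ c5 ∧ c4 ≠ c5 ∧ c4 ≠ c6 ∧ c5 ≠ c6 ∧ c2 ≠ c6 ∧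
      c2 ≠ c5 := by
  by_cases h26 : w2 = w6
  case neg => exact ⟨w2, w3, w4, w5, w6, m2, m3, m4, m5, m6,
      d23, d24, d34, d35, d45, d46, d56, h26, d25⟩
  subst h26
  by_cases hB1 : (R6 \ {w2, w4, w5}).Nonempty
  case pos =>
    obtain ⟨z, hz⟩ := hB1
    rw [mem_sdiff, mem_insert, mem_insert, mem_singleton] at hz
    push_neg at hz
    obtain ⟨hzR, hz2, hz4, hz5⟩ := hz
    exact ⟨w2, w3, w4, w5, z, m2, m3, m4, m5, hzR,
      d23, d24, d34, d35, d45, fun h => hz4 h.symm, fun h => hz5 h.symm,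
      fun h => hz2 h.symm, d25⟩
  have hR6eq : R6 = {w2, w4, w5} := by
    refine Finset.eq_of_subset_of_card_le
      ((sdiff_eq_empty_iff_subset).1 (not_nonempty_iff_eq_empty.1 hB1))
      ((cardle3 w2 w4 w5).trans hR6)
  have m5R6 : w5 ∈ R6 := by rw [hR6eq]; simp
  obtain ⟨z, hz⟩ := sdiff4_nonempty R5 w2 w3 w4 w5 hR5
  rw [mem_sdiff, mem_insert, mem_insert, mem_insert, mem_singleton] at hz
  push_neg at hz
  obtain ⟨hzR, hz2, hz3, hz4, hz5⟩ := hz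
  exact ⟨w2, w3, w4, z, w5, m2, m3, m4, hzR, m5R6,
    d23, d24, d34, fun h => hz3 h.symm, fun h => hz4 h.symm, d45, hz5, d25,
    fun h => hz2 h.symm⟩

open Finset in
theorem ext_FT (R2 R3 R4 R5 R6 : Finset ℕ) (w2 w3 w4 w5 w6 : ℕ)
    (hR2 : 3 ≤ R2.card) (hR3 : 5 ≤ R3.card)
    (m2 : w2 ∈ R2) (m3 : w3 ∈ R3) (m4 : w4 ∈ R4) (m5 : w5 ∈ R5) (m6 : w6 ∈ R6)
    (d23 : w2 ≠ w3) (d24 : w2 ≠ w4) (d34 : w3 ≠ w4) (d35 : w3 ≠ w5)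
    (d45 : w4 ≠ w5) (d46 : w4 ≠ w6) (d56 : w5 ≠ w6) (d36 : w3 ≠ w6) :
    ∃ c2 c3 c4 c5 c6, c2 ∈ R2 ∧ c3 ∈ R3 ∧ c4 ∈ R4 ∧ c5 ∈ R5 ∧ c6 ∈ R6 ∧
      c2 ≠ c3 ∧ c2 ≠ c4 ∧ c3 ≠ c4 ∧ c3 ≠ c5 ∧ c4 ≠ c5 ∧ c4 ≠ c6 ∧ c5 ≠ c6 ∧ c2 ≠ c6 ∧
      c3 ≠ c6 := by
  by_cases h26 : w2 = w6
  case neg => exact ⟨w2, w3, w4, w5, w6, m2, m3, m4, m5, m6,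
      d23, d24, d34, d35, d45, d46, d56, h26, d36⟩
  subst h26
  by_cases hB2 : (R2 \ {w2, w3, w4}).Nonempty
  case pos =>
    obtain ⟨z, hz⟩ := hB2
    rw [mem_sdiff, mem_insert, mem_insert, mem_singleton] at hz
    push_neg at hz
    obtain ⟨hzR, hz2, hz3, hz4⟩ := hz
    exact ⟨z, w3, w4, w5, w2, hzR, m3, m4, m5, m6,
      hz3, hz4, d34, d35, d45, d46, d56, hz2, d36⟩
  have hR2eq : R2 = {w2, w3, w4} := by
    refine Finset.eq_of_subset_of_card_le
      ((sdiff_eq_empty_iff_subset).1 (not_nonempty_iff_eq_empty.1 hB2))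
      ((cardle3 w2 w3 w4).trans hR2)
  have m3R2 : w3 ∈ R2 := by rw [hR2eq]; simp
  obtain ⟨z, hz⟩ := sdiff4_nonempty R3 w2 w3 w4 w5 hR3
  rw [mem_sdiff, mem_insert, mem_insert, mem_insert, mem_singleton] at hz
  push_neg at hz
  obtain ⟨hzR, hz2, hz3, hz4, hz5⟩ := hz
  exact ⟨w3, z, w4, w5, w2, m3R2, hzR, m4, m5, m6,
    fun h => hz3 h.symm, d34, hz4, hz5, d45, d46, d56, d23.symm, hz2⟩

open Finset in
theorem ext_TT (R2 R3 R4 R5 R6 : Finset ℕ) (w2 w3 w4 w5 w6 : ℕ)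
    (hR2 : 5 ≤ R2.card) (hR6 : 5 ≤ R6.card)
    (m2 : w2 ∈ R2) (m3 : w3 ∈ R3) (m4 : w4 ∈ R4) (m5 : w5 ∈ R5) (m6 : w6 ∈ R6)
    (d23 : w2 ≠ w3) (d24 : w2 ≠ w4) (d34 : w3 ≠ w4) (d35 : w3 ≠ w5)
    (d45 : w4 ≠ w5) (d46 : w4 ≠ w6) (d56 : w5 ≠ w6) (d25 : w2 ≠ w5) (d36 : w3 ≠ w6) :
    ∃ c2 c3 c4 c5 c6, c2 ∈ R2 ∧ c3 ∈ R3 ∧ c4 ∈ R4 ∧ c5 ∈ R5 ∧ c6 ∈ R6 ∧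
      c2 ≠ c3 ∧ c2 ≠ c4 ∧ c3 ≠ c4 ∧ c3 ≠ c5 ∧ c4 ≠ c5 ∧ c4 ≠ c6 ∧ c5 ≠ c6 ∧ c2 ≠ c6 ∧
      c2 ≠ c5 ∧ c3 ≠ c6 := by
  by_cases h26 : w2 = w6
  case neg => exact ⟨w2, w3, w4, w5, w6, m2, m3, m4, m5, m6,
      d23, d24, d34, d35, d45, d46, d56, h26, d25, d36⟩
  subst h26
  obtain ⟨z6, hz6⟩ := sdiff4_nonempty R6 w2 w3 w4 w5 hR6
  rw [mem_sdiff, mem_insert, mem_insert, mem_insert, mem_singleton] at hz6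
  push_neg at hz6
  obtain ⟨hz6R, hz62, hz63, hz64, hz65⟩ := hz6
  obtain ⟨z2, hz2⟩ := sdiff4_nonempty R2 w3 w4 w5 z6 hR2
  rw [mem_sdiff, mem_insert, mem_insert, mem_insert, mem_singleton] at hz2
  push_neg at hz2
  obtain ⟨hz2R, hz23, hz24, hz25, hz26⟩ := hz2
  exact ⟨z2, w3, w4, w5, z6, hz2R, m3, m4, m5, hz6R,
    hz23, hz24, d34, d35, d45, fun h => hz64 h.symm, fun h => hz65 h.symm,
    hz26, hz25, fun h => hz63 h.symm⟩

section Main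

variable {V : Type} [Fintype V]

lemma key (G : SimpleGraph V)
    (hsub : Subcubic G) (hpl : Planar G) (h5 : NoFiveCycle G)
    (hmin : ∀ (n : ℕ), n < Fintype.card V → ∀ G' : SimpleGraph (Fin n),
      Subcubic G' → Planar G' → NoFiveCycle G' → Choosable (square G') 7)
    (x1 x2 x3 x4 x5 x6 : V)
    (a12 : G.Adj x1 x2) (a23 : G.Adj x2 x3) (a34 : G.Adj x3 x4)
    (a45 : G.Adj x4 x5) (a56 : G.Adj x5 x6) (a61 : G.Adj x6 x1)
    (n12 : x1 ≠ x2) (n13 : x1 ≠ x3) (n14 : x1 ≠ x4) (n15 : x1 ≠ x5) (n16 : x1 ≠ x6)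
    (n23 : x2 ≠ x3) (n24 : x2 ≠ x4) (n25 : x2 ≠ x5) (n26 : x2 ≠ x6)
    (n34 : x3 ≠ x4) (n35 : x3 ≠ x5) (n36 : x3 ≠ x6)
    (n45 : x4 ≠ x5) (n46 : x4 ≠ x6) (n56 : x5 ≠ x6)
    (hdeg : (G.neighborSet x1).ncard = 2) :
    Choosable (square G) 7 := by
  classical
  intro L hL
  have hN1 : G.neighborSet x1 = {x2, x6} := nbr_eq_pair hdeg a12 a61.symm n26
  set S : Set V := {x1, x2, x3, x4, x5, x6} with hSdef
  have hx1S : x1 ∈ S := by simp [hSdef]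
  have hx2S : x2 ∈ S := by simp [hSdef]
  have hx3S : x3 ∈ S := by simp [hSdef]
  have hx4S : x4 ∈ S := by simp [hSdef]
  have hx5S : x5 ∈ S := by simp [hSdef]
  have hx6S : x6 ∈ S := by simp [hSdef]
  have hSd : ∀ u : V, u ∈ S →
      u = x1 ∨ u = x2 ∨ u = x3 ∨ u = x4 ∨ u = x5 ∨ u = x6 := by
    intro u hu; simpa [hSdef] using hu
  -- the smaller graph
  have hn : Fintype.card {u : V // u ≠ x1} < Fintype.card V := by
    apply Fintype.card_subtype_lt (x := x1); simp
  set n : ℕ := Fintype.card {u : V // u ≠ x1} with hndef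
  set e : {u : V // u ≠ x1} ≃ Fin n := Fintype.equivFin _ with hedef
  set emb : Fin n → V := fun i => ((e.symm i) : V) with hembdef
  have hembInj : Function.Injective emb := by
    intro i j h
    have : e.symm i = e.symm j := Subtype.ext h
    exact e.symm.injective this
  have hembne : ∀ i, emb i ≠ x1 := fun i => (e.symm i).2
  have hembe : ∀ (u : V) (h : u ≠ x1), emb (e ⟨u, h⟩) = u := by
    intro u h
    simp [hembdef]
  set G' : SimpleGraph (Fin n) := G.comap emb with hG'def
  have hG'adj : ∀ i j, G'.Adj i j ↔ G.Adj (emb i) (emb j) := fun i j => Iff.rfl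
  -- properties of G'
  have hsub' : Subcubic G' := by
    intro i
    have himg : emb '' (G'.neighborSet i) ⊆ G.neighborSet (emb i) := by
      rintro _ ⟨j, hj, rfl⟩; exact hj
    calc (G'.neighborSet i).ncard
        = (emb '' G'.neighborSet i).ncard := (Set.ncard_image_of_injective _ hembInj).symm
      _ ≤ (G.neighborSet (emb i)).ncard := Set.ncard_le_ncard himg (Set.toFinite _)
      _ ≤ 3 := hsub _
  have h5' : NoFiveCycle G' := by
    intro i w hw hlen
    let φ : G' →g G := ⟨emb, fun h => h⟩
    have hφ : Function.Injective (φ : Fin n → V) := hembInj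
    exact h5 (emb i) (w.map φ) (hw.map hφ) (by rw [Walk.length_map]; exact hlen)
  have hminor : ∀ {W : Type} (H : SimpleGraph W), IsMinor G' H → IsMinor G H := by
    intro W H h
    obtain ⟨f, hne, hconn, hdisj, hedge⟩ := h
    refine ⟨fun w => emb '' f w, fun w => (hne w).image _, ?_, ?_, ?_⟩
    · intro w
      have hc := hconn w
      let ψ : (G'.induce (f w)) →g (G.induce (emb '' f w)) :=
        { toFun := fun a => ⟨emb a.1, a.1, a.2, rfl⟩,
          map_rel' := by
            rintro ⟨a, ha⟩ ⟨b, hb⟩ hab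
            exact hab }
      have hsurj : Function.Surjective ψ := by
        rintro ⟨u, a, ha, rfl⟩
        exact ⟨⟨a, ha⟩, rfl⟩
      exact hc.map ψ hsurj
    · intro w1 w2 hne'
      exact (Set.disjoint_image_iff hembInj).2 (hdisj w1 w2 hne')
    · intro w1 w2 hadj
      obtain ⟨a, ha, b, hb, hab⟩ := hedge w1 w2 hadj
      exact ⟨emb a, Set.mem_image_of_mem _ ha, emb b, Set.mem_image_of_mem _ hb, hab⟩
  have hpl' : Planar G' := ⟨fun h => hpl.1 (hminor _ h), fun h => hpl.2 (hminor _ h)⟩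
  -- coloring of the smaller graph
  obtain ⟨c', hc'mem, hc'prop⟩ :=
    hmin n hn G' hsub' hpl' h5' (fun i => L (emb i)) (fun i => hL (emb i))
  set cout : V → ℕ := fun u => if h : u = x1 then 0 else c' (e ⟨u, h⟩) with hcoutdef
  have hcout_eval : ∀ (u : V) (h : u ≠ x1), cout u = c' (e ⟨u, h⟩) := by
    intro u h
    simp [hcoutdef, h]
  have hcoutL : ∀ (u : V), u ≠ x1 → cout u ∈ L u := by
    intro u h
    rw [hcout_eval u h]
    have := hc'mem (e ⟨u, h⟩)
    rwa [hembe u h] at this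
  have hprop2 : ∀ u v : V, u ≠ x1 → v ≠ x1 → u ≠ v →
      (G.Adj u v ∨ ∃ w, w ≠ x1 ∧ G.Adj u w ∧ G.Adj w v) → cout u ≠ cout v := by
    intro u v hu hv huv hadj
    have hsq : (square G').Adj (e ⟨u, hu⟩) (e ⟨v, hv⟩) := by
      constructor
      · intro h
        apply huv
        have := e.injective h
        exact congrArg Subtype.val this
      · rcases hadj with h | ⟨w, hw, h1, h2⟩
        · left
          show G.Adj (emb (e ⟨u, hu⟩)) (emb (e ⟨v, hv⟩))
          rw [hembe, hembe]; exact h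
        · right
          refine ⟨e ⟨w, hw⟩, ?_, ?_⟩
          · show G.Adj (emb (e ⟨u, hu⟩)) (emb (e ⟨w, hw⟩))
            rw [hembe, hembe]; exact h1
          · show G.Adj (emb (e ⟨w, hw⟩)) (emb (e ⟨v, hv⟩))
            rw [hembe, hembe]; exact h2
    have := hc'prop _ _ hsq
    rw [hcout_eval u hu, hcout_eval v hv]
    exact this
  -- non-square-adjacency of the antipodal pair (x1,x4)
  have hmemN1 : ∀ y : V, G.Adj x1 y → y = x2 ∨ y = x6 := by
    intro y hy
    have : y ∈ G.neighborSet x1 := hy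
    rw [hN1] at this
    simpa using this
  have hn14 : ¬ (square G).Adj x1 x4 := by
    rintro ⟨hne, hadj | ⟨w, hw1, hw2⟩⟩
    · rcases hmemN1 x4 hadj with h | h
      · exact n24 h.symm
      · exact n46 h
    · rcases hmemN1 w hw1 with rfl | rfl
      · exact no_five h5 hw2 a45 a56 a61 a12 n24 n25 n26 n12.symm n45 n46
          n14.symm n56 n15.symm n16.symm
      · exact no_five h5 hw2 a34.symm a23.symm a12.symm a61.symm n46.symm n36.symm
          n26.symm n16.symm n34.symm n24.symm n14.symm n23.symm n13.symm n12.symm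
  -- outside square-neighborhood bounds
  have hA2 : ∀ u, G.Adj x2 u → u ∉ S → u ∈ (G.neighborSet x2 \ {x1, x3}) := by
    intro u hu huS
    refine ⟨hu, ?_⟩
    simp only [Set.mem_insert_iff, Set.mem_singleton_iff]
    push_neg
    exact ⟨fun h => huS (h ▸ hx1S), fun h => huS (h ▸ hx3S)⟩
  have hA2c : (G.neighborSet x2 \ {x1, x3}).ncard ≤ 1 :=
    ncard_diff2_le (by exact a12.symm) (by exact a23) n13 (hsub x2)
  have hA3 : ∀ u, G.Adj x3 u → u ∉ S → u ∈ (G.neighborSet x3 \ {x2, x4}) := by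
    intro u hu huS
    exact ⟨hu, by
      simp only [Set.mem_insert_iff, Set.mem_singleton_iff]
      push_neg
      exact ⟨fun h => huS (h ▸ hx2S), fun h => huS (h ▸ hx4S)⟩⟩
  have hA3c : (G.neighborSet x3 \ {x2, x4}).ncard ≤ 1 :=
    ncard_diff2_le (by exact a23.symm) (by exact a34) n24 (hsub x3)
  have hA4 : ∀ u, G.Adj x4 u → u ∉ S → u ∈ (G.neighborSet x4 \ {x3, x5}) := by
    intro u hu huS
    exact ⟨hu, by
      simp only [Set.mem_insert_iff, Set.mem_singleton_iff]
      push_neg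
      exact ⟨fun h => huS (h ▸ hx3S), fun h => huS (h ▸ hx5S)⟩⟩
  have hA4c : (G.neighborSet x4 \ {x3, x5}).ncard ≤ 1 :=
    ncard_diff2_le (by exact a34.symm) (by exact a45) n35 (hsub x4)
  have hA5 : ∀ u, G.Adj x5 u → u ∉ S → u ∈ (G.neighborSet x5 \ {x4, x6}) := by
    intro u hu huS
    exact ⟨hu, by
      simp only [Set.mem_insert_iff, Set.mem_singleton_iff]
      push_neg
      exact ⟨fun h => huS (h ▸ hx4S), fun h => huS (h ▸ hx6S)⟩⟩
  have hA5c : (G.neighborSet x5 \ {x4, x6}).ncard ≤ 1 :=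
    ncard_diff2_le (by exact a45.symm) (by exact a56) n46 (hsub x5)
  have hA6 : ∀ u, G.Adj x6 u → u ∉ S → u ∈ (G.neighborSet x6 \ {x5, x1}) := by
    intro u hu huS
    exact ⟨hu, by
      simp only [Set.mem_insert_iff, Set.mem_singleton_iff]
      push_neg
      exact ⟨fun h => huS (h ▸ hx5S), fun h => huS (h ▸ hx1S)⟩⟩
  have hA6c : (G.neighborSet x6 \ {x5, x1}).ncard ≤ 1 :=
    ncard_diff2_le (by exact a56.symm) (by exact a61) n15.symm (hsub x6)
  have hA1 : ∀ u, G.Adj x1 u → u ∉ S → u ∈ (∅ : Set V) := by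
    intro u hu huS
    exfalso
    rcases hmemN1 u hu with rfl | rfl
    · exact huS hx2S
    · exact huS hx6S
  have hA1c : (∅ : Set V).ncard ≤ 0 := by simp
  have hO1 : (OutNbr G S x1).ncard ≤ 2 := by
    have := obound0 (G := G) S x1 x2 x6 _ _ n26 hx2S hx6S hA2 hA2c hA6 hA6c ?_
    · omega
    · intro t ht h2 h6
      exact absurd (hmemN1 t ht) (by simp [h2, h6])
  have hO2 : (OutNbr G S x2).ncard ≤ 4 := by
    have := obound2 hsub S x2 x1 x3 _ _ a12.symm a23 n13 hx2S hx1S hx3S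
      hA1 hA1c hA3 hA3c
    omega
  have hO6 : (OutNbr G S x6).ncard ≤ 4 := by
    have := obound2 hsub S x6 x5 x1 _ _ a56.symm a61 n15.symm hx6S hx5S hx1S
      hA5 hA5c hA1 hA1c
    omega
  have hO3 : (OutNbr G S x3).ncard ≤ 5 := by
    have := obound2 hsub S x3 x2 x4 _ _ a23.symm a34 n24 hx3S hx2S hx4S
      hA2 hA2c hA4 hA4c
    omega
  have hO4 : (OutNbr G S x4).ncard ≤ 5 := by
    have := obound2 hsub S x4 x3 x5 _ _ a34.symm a45 n35 hx4S hx3S hx5S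
      hA3 hA3c hA5 hA5c
    omega
  have hO5 : (OutNbr G S x5).ncard ≤ 5 := by
    have := obound2 hsub S x5 x4 x6 _ _ a45.symm a56 n46 hx5S hx4S hx6S
      hA4 hA4c hA6 hA6c
    omega
  -- residual lists
  set F : V → Finset ℕ := fun x => ((Set.toFinite (OutNbr G S x)).toFinset).image cout
    with hFdef
  set R : V → Finset ℕ := fun x => L x \ F x with hRdef
  have hFcard : ∀ (x : V) (k : ℕ), (OutNbr G S x).ncard ≤ k → (F x).card ≤ k := by
    intro x k hk
    calc (F x).card ≤ ((Set.toFinite (OutNbr G S x)).toFinset).card :=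
          Finset.card_image_le
      _ = (OutNbr G S x).ncard :=
          (Set.ncard_eq_toFinset_card _ (Set.toFinite _)).symm
      _ ≤ k := hk
  have hRcard : ∀ (x : V) (k : ℕ), (OutNbr G S x).ncard ≤ k → 7 - k ≤ (R x).card := by
    intro x k hk
    have h1 := Finset.le_card_sdiff (F x) (L x)
    have h2 := hFcard x k hk
    have h3 := hL x
    simp only [hRdef]
    omega
  have hRsubL : ∀ x : V, R x ⊆ L x := fun x => Finset.sdiff_subset
  have hRnotF : ∀ (x : V) (cc : ℕ), cc ∈ R x → cc ∉ F x := by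
    intro x cc hcc
    exact (Finset.mem_sdiff.1 hcc).2
  have hFmem : ∀ (x u : V), u ∈ OutNbr G S x → cout u ∈ F x := by
    intro x u hu
    simp only [hFdef, Finset.mem_image]
    exact ⟨u, by simpa using hu, rfl⟩
  -- a member of R x is distinct from the colors of outside square-neighbors
  have hside : ∀ (x : V) (cc : ℕ), cc ∈ R x → ∀ u, u ∉ S →
      (G.Adj x u ∨ ∃ w, G.Adj x w ∧ G.Adj w u) → cc ≠ cout u := by
    intro x cc hcc u huS hadj h
    exact hRnotF x cc hcc (h ▸ hFmem x u ⟨huS, hadj⟩)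
  -- witness membership: cout x ∈ R x for x on the cycle, x ≠ x1
  have hwmem : ∀ x : V, x ≠ x1 → x ∈ S → cout x ∈ R x := by
    intro x hx hxS
    rw [hRdef]
    simp only [Finset.mem_sdiff]
    refine ⟨hcoutL x hx, ?_⟩
    intro hmem
    simp only [hFdef, Finset.mem_image, Set.Finite.mem_toFinset] at hmem
    obtain ⟨u, huO, hequ⟩ := hmem
    obtain ⟨huS, hadj⟩ := huO
    have hune : x ≠ u := fun h => huS (h ▸ hxS)
    have hux1 : u ≠ x1 := fun h => huS (h ▸ hx1S)
    refine hprop2 x u hx hux1 hune ?_ hequ.symm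
    rcases hadj with h | ⟨w, hw1, hw2⟩
    · exact Or.inl h
    · by_cases hw : w = x1
      · exfalso
        subst hw
        rcases hmemN1 u hw2 with rfl | rfl
        · exact huS hx2S
        · exact huS hx6S
      · exact Or.inr ⟨w, hw, hw1, hw2⟩
  -- witness distinctness facts
  have hw23 : cout x2 ≠ cout x3 := hprop2 x2 x3 n12.symm n13.symm n23 (Or.inl a23)
  have hw24 : cout x2 ≠ cout x4 :=
    hprop2 x2 x4 n12.symm n14.symm n24 (Or.inr ⟨x3, n13.symm, a23, a34⟩)
  have hw34 : cout x3 ≠ cout x4 := hprop2 x3 x4 n13.symm n14.symm n34 (Or.inl a34)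
  have hw35 : cout x3 ≠ cout x5 :=
    hprop2 x3 x5 n13.symm n15.symm n35 (Or.inr ⟨x4, n14.symm, a34, a45⟩)
  have hw45 : cout x4 ≠ cout x5 := hprop2 x4 x5 n14.symm n15.symm n45 (Or.inl a45)
  have hw46 : cout x4 ≠ cout x6 :=
    hprop2 x4 x6 n14.symm n16.symm n46 (Or.inr ⟨x5, n15.symm, a45, a56⟩)
  have hw56 : cout x5 ≠ cout x6 := hprop2 x5 x6 n15.symm n16.symm n56 (Or.inl a56)
  have hw25 : G.Adj x2 x5 → cout x2 ≠ cout x5 :=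
    fun h => hprop2 x2 x5 n12.symm n15.symm n25 (Or.inl h)
  have hw36 : G.Adj x3 x6 → cout x3 ≠ cout x6 :=
    fun h => hprop2 x3 x6 n13.symm n16.symm n36 (Or.inl h)
  -- witness memberships
  have hm2 : cout x2 ∈ R x2 := hwmem x2 n12.symm hx2S
  have hm3 : cout x3 ∈ R x3 := hwmem x3 n13.symm hx3S
  have hm4 : cout x4 ∈ R x4 := hwmem x4 n14.symm hx4S
  have hm5 : cout x5 ∈ R x5 := hwmem x5 n15.symm hx5S
  have hm6 : cout x6 ∈ R x6 := hwmem x6 n16.symm hx6S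
  -- the non-square-adjacency of antipodal pairs without chords
  have hn25 : ¬ G.Adj x2 x5 → ¬ (square G).Adj x2 x5 := by
    intro hch
    rintro ⟨hne, hadj | ⟨w, hw1, hw2⟩⟩
    · exact hch hadj
    · by_cases h1 : w = x1
      · subst h1
        rcases hmemN1 x5 hw2 with h | h
        · exact n25 h.symm
        · exact n56 h
      by_cases h2 : w = x2
      · subst h2; exact G.irrefl hw1
      by_cases h3 : w = x3
      · subst h3
        exact no_five h5 hw2 a56 a61 a12 a23 n35 n36 n13.symm n23.symm n56
          n15.symm n25.symm n16.symm n26.symm n12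
      by_cases h4 : w = x4
      · subst h4
        exact no_five h5 hw1 a45 a56 a61 a12 n24 n25 n26 n12.symm n45 n46
          n14.symm n56 n15.symm n16.symm
      by_cases h5' : w = x5
      · subst h5'; exact G.irrefl hw2
      by_cases h6 : w = x6
      · subst h6
        exact no_five h5 a23 a34 a45 a56 hw1.symm n23 n24 n25 n26 n34 n35 n36
          n45 n46 n56
      · exact no_five h5 hw1.symm a12.symm a61.symm a56.symm hw2.symm
          h2 h1 h6 h5' n12.symm n26 n25 n16 n15 n56.symm
  have hn36 : ¬ G.Adj x3 x6 → ¬ (square G).Adj x3 x6 := by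
    intro hch
    rintro ⟨hne, hadj | ⟨w, hw1, hw2⟩⟩
    · exact hch hadj
    · by_cases h1 : w = x1
      · subst h1
        rcases hmemN1 x3 hw1.symm with h | h
        · exact n23 h.symm
        · exact n36 h
      by_cases h2 : w = x2
      · subst h2
        exact no_five h5 a23 a34 a45 a56 hw2.symm n23 n24 n25 n26 n34 n35 n36
          n45 n46 n56
      by_cases h3 : w = x3
      · subst h3; exact G.irrefl hw1
      by_cases h4 : w = x4
      · subst h4
        exact no_five h5 hw2.symm a34.symm a23.symm a12.symm a61.symm n46.symm n36.symm
          n26.symm n16.symm n34.symm n24.symm n14.symm n23.symm n13.symm n12.symm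
      by_cases h5' : w = x5
      · subst h5'
        exact no_five h5 hw1 a56 a61 a12 a23 n35 n36 n13.symm n23.symm n56
          n15.symm n25.symm n16.symm n26.symm n12
      by_cases h6 : w = x6
      · subst h6; exact G.irrefl hw2
      · exact no_five h5 hw1.symm a23.symm a12.symm a61.symm hw2.symm
          h3 h2 h1 h6 n23.symm n13.symm n36 n12.symm n26 n16
  -- the extension over x2..x6
  have hEXT : ∃ c2 c3 c4 c5 c6 : ℕ, c2 ∈ R x2 ∧ c3 ∈ R x3 ∧ c4 ∈ R x4 ∧ c5 ∈ R x5 ∧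
      c6 ∈ R x6 ∧ c2 ≠ c3 ∧ c2 ≠ c4 ∧ c3 ≠ c4 ∧ c3 ≠ c5 ∧ c4 ≠ c5 ∧ c4 ≠ c6 ∧
      c5 ≠ c6 ∧ c2 ≠ c6 ∧ ((square G).Adj x2 x5 → c2 ≠ c5) ∧
      ((square G).Adj x3 x6 → c3 ≠ c6) := by
    by_cases hc25 : G.Adj x2 x5 <;> by_cases hc36 : G.Adj x3 x6
    · -- both chords
      have hN2 : G.neighborSet x2 = {x1, x3, x5} :=
        nbr_eq_triple (hsub x2) a12.symm a23 hc25 n13 n15 n35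
      have hN3 : G.neighborSet x3 = {x2, x4, x6} :=
        nbr_eq_triple (hsub x3) a23.symm a34 hc36 n24 n26 n46
      have hN5 : G.neighborSet x5 = {x4, x6, x2} :=
        nbr_eq_triple (hsub x5) a45.symm a56 hc25.symm n46 n24.symm n26.symm
      have hN6 : G.neighborSet x6 = {x5, x1, x3} :=
        nbr_eq_triple (hsub x6) a56.symm a61 hc36.symm n15.symm n35.symm n13
      have hB3 : ∀ u, G.Adj x3 u → u ∉ S → u ∈ (∅ : Set V) := by
        intro u hu huS
        exfalso
        have hh : u ∈ G.neighborSet x3 := hu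
        rw [hN3] at hh
        simp only [Set.mem_insert_iff, Set.mem_singleton_iff] at hh
        rcases hh with h | h | h
        · exact huS (h.symm ▸ hx2S)
        · exact huS (h.symm ▸ hx4S)
        · exact huS (h.symm ▸ hx6S)
      have hB5 : ∀ u, G.Adj x5 u → u ∉ S → u ∈ (∅ : Set V) := by
        intro u hu huS
        exfalso
        have hh : u ∈ G.neighborSet x5 := hu
        rw [hN5] at hh
        simp only [Set.mem_insert_iff, Set.mem_singleton_iff] at hh
        rcases hh with h | h | h
        · exact huS (h.symm ▸ hx4S)
        · exact huS (h.symm ▸ hx6S)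
        · exact huS (h.symm ▸ hx2S)
      have hO2' : (OutNbr G S x2).ncard ≤ 2 := by
        have := obound0 (G := G) S x2 x1 x3 _ _ n13 hx1S hx3S hA1 hA1c hB3 hA1c ?_
        · omega
        · intro t ht h1 h3
          have hh : t ∈ G.neighborSet x2 := ht
          rw [hN2] at hh
          simp only [Set.mem_insert_iff, Set.mem_singleton_iff] at hh
          rcases hh with h | h | h
          · exact absurd h h1
          · exact absurd h h3
          · rw [h]
            refine ⟨hx5S, fun u hu => ?_⟩
            have hh : u ∈ G.neighborSet x5 := hu
            rw [hN5] at hh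
            simp only [Set.mem_insert_iff, Set.mem_singleton_iff] at hh
            rcases hh with h' | h' | h'
            exacts [h'.symm ▸ hx4S, h'.symm ▸ hx6S, h'.symm ▸ hx2S]
      have hO6' : (OutNbr G S x6).ncard ≤ 2 := by
        have := obound0 (G := G) S x6 x5 x1 _ _ n15.symm hx5S hx1S hB5 hA1c hA1 hA1c ?_
        · omega
        · intro t ht h5' h1
          have hh : t ∈ G.neighborSet x6 := ht
          rw [hN6] at hh
          simp only [Set.mem_insert_iff, Set.mem_singleton_iff] at hh
          rcases hh with h | h | h
          · exact absurd h h5'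
          · exact absurd h h1
          · rw [h]
            refine ⟨hx3S, fun u hu => ?_⟩
            have hh : u ∈ G.neighborSet x3 := hu
            rw [hN3] at hh
            simp only [Set.mem_insert_iff, Set.mem_singleton_iff] at hh
            rcases hh with h' | h' | h'
            exacts [h'.symm ▸ hx2S, h'.symm ▸ hx4S, h'.symm ▸ hx6S]
      obtain ⟨c2, c3, c4, c5, c6, mc2, mc3, mc4, mc5, mc6,
        e23, e24, e34, e35, e45, e46, e56, e26, e25, e36⟩ :=
        ext_TT (R x2) (R x3) (R x4) (R x5) (R x6)
          (cout x2) (cout x3) (cout x4) (cout x5) (cout x6)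
          (hRcard x2 2 hO2') (hRcard x6 2 hO6')
          hm2 hm3 hm4 hm5 hm6 hw23 hw24 hw34 hw35 hw45 hw46 hw56
          (hw25 hc25) (hw36 hc36)
      exact ⟨c2, c3, c4, c5, c6, mc2, mc3, mc4, mc5, mc6,
        e23, e24, e34, e35, e45, e46, e56, e26, fun _ => e25, fun _ => e36⟩
    · -- chord 2-5 only
      have hN2 : G.neighborSet x2 = {x1, x3, x5} :=
        nbr_eq_triple (hsub x2) a12.symm a23 hc25 n13 n15 n35
      have hN5 : G.neighborSet x5 = {x4, x6, x2} :=
        nbr_eq_triple (hsub x5) a45.symm a56 hc25.symm n46 n24.symm n26.symm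
      have hO5' : (OutNbr G S x5).ncard ≤ 2 := by
        have := obound0 (G := G) S x5 x4 x6 _ _ n46 hx4S hx6S hA4 hA4c hA6 hA6c ?_
        · omega
        · intro t ht h4 h6
          have hh : t ∈ G.neighborSet x5 := ht
          rw [hN5] at hh
          simp only [Set.mem_insert_iff, Set.mem_singleton_iff] at hh
          rcases hh with h | h | h
          · exact absurd h h4
          · exact absurd h h6
          · rw [h]
            refine ⟨hx2S, fun u hu => ?_⟩
            have hh : u ∈ G.neighborSet x2 := hu
            rw [hN2] at hh
            simp only [Set.mem_insert_iff, Set.mem_singleton_iff] at hh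
            rcases hh with h' | h' | h'
            exacts [h'.symm ▸ hx1S, h'.symm ▸ hx3S, h'.symm ▸ hx5S]
      obtain ⟨c2, c3, c4, c5, c6, mc2, mc3, mc4, mc5, mc6,
        e23, e24, e34, e35, e45, e46, e56, e26, e25⟩ :=
        ext_TF (R x2) (R x3) (R x4) (R x5) (R x6)
          (cout x2) (cout x3) (cout x4) (cout x5) (cout x6)
          (hRcard x5 2 hO5') (hRcard x6 4 hO6)
          hm2 hm3 hm4 hm5 hm6 hw23 hw24 hw34 hw35 hw45 hw46 hw56
          (hw25 hc25)
      exact ⟨c2, c3, c4, c5, c6, mc2, mc3, mc4, mc5, mc6,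
        e23, e24, e34, e35, e45, e46, e56, e26, fun _ => e25,
        fun h => absurd h (hn36 hc36)⟩
    · -- chord 3-6 only
      have hN3 : G.neighborSet x3 = {x2, x4, x6} :=
        nbr_eq_triple (hsub x3) a23.symm a34 hc36 n24 n26 n46
      have hN6 : G.neighborSet x6 = {x5, x1, x3} :=
        nbr_eq_triple (hsub x6) a56.symm a61 hc36.symm n15.symm n35.symm n13
      have hO3' : (OutNbr G S x3).ncard ≤ 2 := by
        have := obound0 (G := G) S x3 x2 x4 _ _ n24 hx2S hx4S hA2 hA2c hA4 hA4c ?_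
        · omega
        · intro t ht h2 h4
          have hh : t ∈ G.neighborSet x3 := ht
          rw [hN3] at hh
          simp only [Set.mem_insert_iff, Set.mem_singleton_iff] at hh
          rcases hh with h | h | h
          · exact absurd h h2
          · exact absurd h h4
          · rw [h]
            refine ⟨hx6S, fun u hu => ?_⟩
            have hh : u ∈ G.neighborSet x6 := hu
            rw [hN6] at hh
            simp only [Set.mem_insert_iff, Set.mem_singleton_iff] at hh
            rcases hh with h' | h' | h'
            exacts [h'.symm ▸ hx5S, h'.symm ▸ hx1S, h'.symm ▸ hx3S]
      obtain ⟨c2, c3, c4, c5, c6, mc2, mc3, mc4, mc5, mc6,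
        e23, e24, e34, e35, e45, e46, e56, e26, e36⟩ :=
        ext_FT (R x2) (R x3) (R x4) (R x5) (R x6)
          (cout x2) (cout x3) (cout x4) (cout x5) (cout x6)
          (hRcard x2 4 hO2) (hRcard x3 2 hO3')
          hm2 hm3 hm4 hm5 hm6 hw23 hw24 hw34 hw35 hw45 hw46 hw56
          (hw36 hc36)
      exact ⟨c2, c3, c4, c5, c6, mc2, mc3, mc4, mc5, mc6,
        e23, e24, e34, e35, e45, e46, e56, e26,
        fun h => absurd h (hn25 hc25), fun _ => e36⟩
    · -- no chords
      obtain ⟨c2, c3, c4, c5, c6, mc2, mc3, mc4, mc5, mc6,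
        e23, e24, e34, e35, e45, e46, e56, e26⟩ :=
        ext_FF (R x2) (R x3) (R x4) (R x5) (R x6)
          (cout x2) (cout x3) (cout x4) (cout x5) (cout x6)
          (hRcard x2 4 hO2) (hRcard x3 5 hO3) (hRcard x4 5 hO4)
          (hRcard x5 5 hO5) (hRcard x6 4 hO6)
          hm2 hm3 hm4 hm5 hm6 hw23 hw24 hw34 hw35 hw45 hw46 hw56
      exact ⟨c2, c3, c4, c5, c6, mc2, mc3, mc4, mc5, mc6,
        e23, e24, e34, e35, e45, e46, e56, e26,
        fun h => absurd h (hn25 hc25), fun h => absurd h (hn36 hc36)⟩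
  obtain ⟨c2, c3, c4, c5, c6, mc2, mc3, mc4, mc5, mc6,
    e23, e24, e34, e35, e45, e46, e56, e26, e25i, e36i⟩ := hEXT
  -- choose the color of x1
  obtain ⟨c1, hc1⟩ := sdiff4_nonempty (R x1) c2 c3 c5 c6
    (by have := hRcard x1 2 hO1; omega)
  rw [Finset.mem_sdiff] at hc1
  obtain ⟨hc1R, hc1n⟩ := hc1
  simp only [Finset.mem_insert, Finset.mem_singleton] at hc1n
  push_neg at hc1n
  obtain ⟨e12, e13, e15, e16⟩ := hc1n
  -- the final coloring
  set cf : V → ℕ := fun v => if v = x1 then c1 else if v = x2 then c2 else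
    if v = x3 then c3 else if v = x4 then c4 else if v = x5 then c5 else
    if v = x6 then c6 else cout v with hcfdef
  have hf1 : cf x1 = c1 := by simp [hcfdef]
  have hf2 : cf x2 = c2 := by simp [hcfdef, n12.symm]
  have hf3 : cf x3 = c3 := by simp [hcfdef, n13.symm, n23.symm]
  have hf4 : cf x4 = c4 := by simp [hcfdef, n14.symm, n24.symm, n34.symm]
  have hf5 : cf x5 = c5 := by simp [hcfdef, n15.symm, n25.symm, n35.symm, n45.symm]
  have hf6 : cf x6 = c6 := by
    simp [hcfdef, n16.symm, n26.symm, n36.symm, n46.symm, n56.symm]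
  have hfout : ∀ u, u ∉ S → cf u = cout u := by
    intro u hu
    have h1 : ¬ (u = x1) := fun h => hu (h ▸ hx1S)
    have h2 : ¬ (u = x2) := fun h => hu (h ▸ hx2S)
    have h3 : ¬ (u = x3) := fun h => hu (h ▸ hx3S)
    have h4 : ¬ (u = x4) := fun h => hu (h ▸ hx4S)
    have h5' : ¬ (u = x5) := fun h => hu (h ▸ hx5S)
    have h6 : ¬ (u = x6) := fun h => hu (h ▸ hx6S)
    simp [hcfdef, h1, h2, h3, h4, h5', h6]
  -- pairwise facts on the cycle
  have p12 : cf x1 ≠ cf x2 := by rw [hf1, hf2]; exact e12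
  have p13 : cf x1 ≠ cf x3 := by rw [hf1, hf3]; exact e13
  have p15 : cf x1 ≠ cf x5 := by rw [hf1, hf5]; exact e15
  have p16 : cf x1 ≠ cf x6 := by rw [hf1, hf6]; exact e16
  have p23 : cf x2 ≠ cf x3 := by rw [hf2, hf3]; exact e23
  have p24 : cf x2 ≠ cf x4 := by rw [hf2, hf4]; exact e24
  have p26 : cf x2 ≠ cf x6 := by rw [hf2, hf6]; exact e26
  have p34 : cf x3 ≠ cf x4 := by rw [hf3, hf4]; exact e34
  have p35 : cf x3 ≠ cf x5 := by rw [hf3, hf5]; exact e35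
  have p45 : cf x4 ≠ cf x5 := by rw [hf4, hf5]; exact e45
  have p46 : cf x4 ≠ cf x6 := by rw [hf4, hf6]; exact e46
  have p56 : cf x5 ≠ cf x6 := by rw [hf5, hf6]; exact e56
  have p14 : (square G).Adj x1 x4 → cf x1 ≠ cf x4 := fun h => absurd h hn14
  have p25 : (square G).Adj x2 x5 → cf x2 ≠ cf x5 := fun h => by
    rw [hf2, hf5]; exact e25i h
  have p36 : (square G).Adj x3 x6 → cf x3 ≠ cf x6 := fun h => by
    rw [hf3, hf6]; exact e36i h
  have hswap : ∀ {a bb : V}, (G.Adj a bb ∨ ∃ w, G.Adj a w ∧ G.Adj w bb) →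
      (G.Adj bb a ∨ ∃ w, G.Adj bb w ∧ G.Adj w a) := by
    rintro a bb (h | ⟨w, h1, h2⟩)
    · exact Or.inl h.symm
    · exact Or.inr ⟨w, h2.symm, h1.symm⟩
  refine ⟨cf, ?_, ?_⟩
  · intro v
    by_cases hv : v ∈ S
    · rcases hSd v hv with h | h | h | h | h | h <;> rw [h]
      · rw [hf1]; exact hRsubL x1 hc1R
      · rw [hf2]; exact hRsubL x2 mc2
      · rw [hf3]; exact hRsubL x3 mc3
      · rw [hf4]; exact hRsubL x4 mc4
      · rw [hf5]; exact hRsubL x5 mc5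
      · rw [hf6]; exact hRsubL x6 mc6
    · rw [hfout v hv]
      exact hcoutL v (fun h => hv (h ▸ hx1S))
  · rintro u v ⟨huv, hpath⟩
    by_cases hu : u ∈ S <;> by_cases hv : v ∈ S
    · rcases hSd u hu with h | h | h | h | h | h <;>
        rcases hSd v hv with h' | h' | h' | h' | h' | h' <;>
        rw [h, h'] at huv hpath ⊢ <;>
        first
        | exact absurd rfl huv
        | exact p12 | exact p13 | exact p15 | exact p16
        | exact p23 | exact p24 | exact p26
        | exact p34 | exact p35
        | exact p45 | exact p46
        | exact p56
        | exact p12.symm | exact p13.symm | exact p15.symm | exact p16.symm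
        | exact p23.symm | exact p24.symm | exact p26.symm
        | exact p34.symm | exact p35.symm
        | exact p45.symm | exact p46.symm
        | exact p56.symm
        | exact p14 ⟨huv, hpath⟩
        | exact (p14 ⟨huv.symm, hswap hpath⟩).symm
        | exact p25 ⟨huv, hpath⟩
        | exact (p25 ⟨huv.symm, hswap hpath⟩).symm
        | exact p36 ⟨huv, hpath⟩
        | exact (p36 ⟨huv.symm, hswap hpath⟩).symm
    · rcases hSd u hu with h | h | h | h | h | h <;>
        rw [h] at huv hpath ⊢ <;>
        rw [hfout v hv] <;>
        first
        | (rw [hf1]; exact hside x1 c1 hc1R v hv hpath)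
        | (rw [hf2]; exact hside x2 c2 mc2 v hv hpath)
        | (rw [hf3]; exact hside x3 c3 mc3 v hv hpath)
        | (rw [hf4]; exact hside x4 c4 mc4 v hv hpath)
        | (rw [hf5]; exact hside x5 c5 mc5 v hv hpath)
        | (rw [hf6]; exact hside x6 c6 mc6 v hv hpath)
    · rcases hSd v hv with h | h | h | h | h | h <;>
        rw [h] at huv hpath ⊢ <;>
        rw [hfout u hu] <;>
        first
        | (rw [hf1]; exact (hside x1 c1 hc1R u hu (hswap hpath)).symm)
        | (rw [hf2]; exact (hside x2 c2 mc2 u hu (hswap hpath)).symm)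
        | (rw [hf3]; exact (hside x3 c3 mc3 u hu (hswap hpath)).symm)
        | (rw [hf4]; exact (hside x4 c4 mc4 u hu (hswap hpath)).symm)
        | (rw [hf5]; exact (hside x5 c5 mc5 u hu (hswap hpath)).symm)
        | (rw [hf6]; exact (hside x6 c6 mc6 u hu (hswap hpath)).symm)
    · rw [hfout u hu, hfout v hv]
      refine hprop2 u v (fun h => hu (h ▸ hx1S)) (fun h => hv (h ▸ hx1S)) huv ?_
      rcases hpath with hh | ⟨w, h1, h2⟩
      · exact Or.inl hh
      · by_cases hw : w = x1
        · exfalso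
          have : G.Adj x1 u := (hw ▸ h1).symm
          rcases hmemN1 u this with h' | h'
          · exact hu (h' ▸ hx2S)
          · exact hu (h' ▸ hx6S)
        · exact Or.inr ⟨w, hw, h1, h2⟩

end Main


/-- In a vertex-minimal subcubic planar graph without 5-cycles whose square is not
7-choosable, no 6-cycle contains a vertex of degree 2. -/
theorem minimal_counterexample_no_six_cycle_with_degree_two_vertex
    {V : Type} [Fintype V] (G : SimpleGraph V)
    (hsub : Subcubic G) (hpl : Planar G) (h5 : NoFiveCycle G)
    (hnot : ¬ Choosable (square G) 7)
    (hmin : ∀ (n : ℕ), n < Fintype.card V → ∀ G' : SimpleGraph (Fin n),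
      Subcubic G' → Planar G' → NoFiveCycle G' → Choosable (square G') 7) :
    ¬ ∃ (x : V) (c : G.Walk x x),
      c.IsCycle ∧ c.length = 6 ∧ ∃ v ∈ c.support, (G.neighborSet v).ncard = 2 := by
  rintro ⟨x, w, hcyc, hlen, v, hvsup, hvdeg⟩
  cases w with
  | nil => simp at hlen
  | cons a1 p =>
    rename_i y2
    cases p with
    | nil => simp at hlen
    | cons a2 p =>
      rename_i y3
      cases p with
      | nil => simp at hlen
      | cons a3 p =>
        rename_i y4
        cases p with
        | nil => simp at hlen
        | cons a4 p =>
          rename_i y5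
          cases p with
          | nil => simp at hlen
          | cons a5 p =>
            rename_i y6
            cases p with
            | nil => simp at hlen
            | cons a6 p =>
              cases p with
              | cons a7 p => simp at hlen
              | nil =>
                have hnd : List.Nodup [y2, y3, y4, y5, y6, x] := by
                  simpa using hcyc.support_nodup
                simp only [List.nodup_cons, List.mem_cons, List.not_mem_nil,
                  List.mem_singleton, or_false, not_or] at hnd
                obtain ⟨⟨q12', q13', q14', q15', q1x⟩, ⟨q23', q24', q25', q2x⟩,
                  ⟨q34', q35', q3x⟩, ⟨q45', q4x⟩, q5x, -⟩ := hnd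
                have q01 : x ≠ y2 := fun h => q1x h.symm
                have q02 : x ≠ y3 := fun h => q2x h.symm
                have q03 : x ≠ y4 := fun h => q3x h.symm
                have q04 : x ≠ y5 := fun h => q4x h.symm
                have q05 : x ≠ y6 := fun h => q5x h.symm
                have q12 : y2 ≠ y3 := q12'
                have q13 : y2 ≠ y4 := q13'
                have q14 : y2 ≠ y5 := q14'
                have q15 : y2 ≠ y6 := q15'
                have q23 : y3 ≠ y4 := q23'
                have q24 : y3 ≠ y5 := q24'
                have q25 : y3 ≠ y6 := q25'
                have q34 : y4 ≠ y5 := q34'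
                have q35 : y4 ≠ y6 := q35'
                have q45 : y5 ≠ y6 := q45'
                have hvs : v = x ∨ v = y2 ∨ v = y3 ∨ v = y4 ∨ v = y5 ∨ v = y6 := by
                  have := hvsup
                  simp only [Walk.support_cons, Walk.support_nil, List.mem_cons,
                    List.not_mem_nil, or_false, List.mem_singleton] at this
                  tauto
                rcases hvs with h | h | h | h | h | h
                · exact hnot (key G hsub hpl h5 hmin x y2 y3 y4 y5 y6 a1 a2 a3 a4 a5 a6
                    q01 q02 q03 q04 q05 q12 q13 q14 q15 q23 q24 q25 q34 q35 q45 (h ▸ hvdeg))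
                · exact hnot (key G hsub hpl h5 hmin y2 y3 y4 y5 y6 x a2 a3 a4 a5 a6 a1
                    q12 q13 q14 q15 q01.symm q23 q24 q25 q02.symm q34 q35 q03.symm q45 q04.symm q05.symm (h ▸ hvdeg))
                · exact hnot (key G hsub hpl h5 hmin y3 y4 y5 y6 x y2 a3 a4 a5 a6 a1 a2
                    q23 q24 q25 q02.symm q12.symm q34 q35 q03.symm q13.symm q45 q04.symm q14.symm q05.symm q15.symm q01 (h ▸ hvdeg))
                · exact hnot (key G hsub hpl h5 hmin y4 y5 y6 x y2 y3 a4 a5 a6 a1 a2 a3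
                    q34 q35 q03.symm q13.symm q23.symm q45 q04.symm q14.symm q24.symm q05.symm q15.symm q25.symm q01 q02 q12 (h ▸ hvdeg))
                · exact hnot (key G hsub hpl h5 hmin y5 y6 x y2 y3 y4 a5 a6 a1 a2 a3 a4
                    q45 q04.symm q14.symm q24.symm q34.symm q05.symm q15.symm q25.symm q35.symm q01 q02 q03 q12 q13 q23 (h ▸ hvdeg))
                · exact hnot (key G hsub hpl h5 hmin y6 x y2 y3 y4 y5 a6 a1 a2 a3 a4 a5
                    q05.symm q15.symm q25.symm q35.symm q45.symm q01 q02 q03 q04 q12 q13 q14 q23 q24 q34 (h ▸ hvdeg))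
end

section
/- Let P_G(x) = ∏_{uv ∈ E(G), u < v} (x_u − x_v) be the graph polynomial of a finite graph G under a fixed linear order on vertices. Then an assignment c : V(G) → ℕ is a proper coloring of G if and only if P_G(c) ≠ 0. Consequently, if there is a monomial ∏_v x_v^{t_v} with nonzero coefficient in the expansion of P_G satisfying t_v < k for all v, then G is k-choosable. -/
/-!
The factor `x_u - x_v` vanishes at `c` exactly when the edge `uv` is monochromatic, and over a
domain a product vanishes only if a factor does. The graph polynomial is homogeneous, so every
monomial in its support has maximal total degree, and Alon's Combinatorial Nullstellensatz, applied
to the lists `L v` viewed inside `ℚ`, gives a point of the grid `∏ L v` where the polynomial does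
not vanish: a proper coloring from the lists.
-/

open MvPolynomial

open Finset

namespace MvPolynomial

theorem IsHomogeneous.exists_eval_ne_zero_of_coeff_ne_zero {σ R : Type*} [Finite σ]
    [CommRing R] [IsDomain R] {f : MvPolynomial σ R} {n : ℕ} (hf : f.IsHomogeneous n)
    {t : σ →₀ ℕ} (ht : f.coeff t ≠ 0) (S : σ → Finset R) (htS : ∀ i, t i < #(S i)) :
    ∃ s : σ → R, (∀ i, s i ∈ S i) ∧ eval s f ≠ 0 := by
  have hdeg : f.totalDegree = t.degree := by
    rw [hf.totalDegree (ne_of_apply_ne (coeff t) ht), ← hf ht, Finsupp.degree_eq_weight_one]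
    rfl
  exact combinatorial_nullstellensatz_exists_eval_nonzero f t ht hdeg S htS

end MvPolynomial

namespace SimpleGraph

section

variable {V : Type*} [Fintype V] [LinearOrder V] (G : SimpleGraph V) [DecidableRel G.Adj]

abbrev orientedEdges : Finset (V × V) :=
  univ.filter fun p : V × V => p.1 < p.2 ∧ G.Adj p.1 p.2

noncomputable def graphPolynomial (R : Type*) [CommRing R] : MvPolynomial V R :=
  ∏ p ∈ G.orientedEdges, (X p.1 - X p.2)

theorem isHomogeneous_graphPolynomial (R : Type*) [CommRing R] :
    (G.graphPolynomial R).IsHomogeneous #G.orientedEdges := by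
  simpa [graphPolynomial] using IsHomogeneous.prod G.orientedEdges
    (fun p => (X p.1 - X p.2 : MvPolynomial V R)) (fun _ => 1) fun p _ => (isHomogeneous_X R p.1).sub (isHomogeneous_X R p.2)

theorem eval_graphPolynomial_ne_zero_iff {R : Type*} [CommRing R] [IsDomain R] (c : V → R) :
    eval c (G.graphPolynomial R) ≠ 0 ↔ ∀ u v, G.Adj u v → c u ≠ c v := by
  simp only [graphPolynomial, map_prod, map_sub, eval_X, prod_ne_zero_iff, mem_filter, mem_univ,
    true_and, sub_ne_zero, and_imp, Prod.forall]
  refine ⟨fun h u v huv => ?_, fun h u v _ huv => h u v huv⟩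
  rcases lt_trichotomy u v with huv' | rfl | hvu
  · exact h u v huv' huv
  · exact (G.irrefl huv).elim
  · exact (h v u hvu huv.symm).symm

end

theorem choosable_of_coeff_graphPolynomial_ne_zero {V : Type} [Fintype V] [LinearOrder V]
    {G : SimpleGraph V} [DecidableRel G.Adj] {k : ℕ} {t : V →₀ ℕ}
    (ht : (G.graphPolynomial ℚ).coeff t ≠ 0) (htk : ∀ v, t v < k) : Choosable G k := by
  intro L hL
  obtain ⟨s, hsL, hs⟩ := (G.isHomogeneous_graphPolynomial ℚ).exists_eval_ne_zero_of_coeff_ne_zero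
    ht (fun v => (L v).map Nat.castEmbedding) (by simpa [hL] using htk)
  choose c hcL hcs using fun v => mem_map.mp (hsL v)
  obtain rfl : (fun v => (c v : ℚ)) = s := funext hcs
  refine ⟨c, hcL, fun u v huv hc => ?_⟩
  rw [eval_graphPolynomial_ne_zero_iff] at hs
  exact hs u v huv (congrArg _ hc)

end SimpleGraph

/-- The graph polynomial `P_G(x) = ∏_{uv ∈ E, u < v} (x_u − x_v)` (with respect to a
fixed linear order on the vertices): an assignment `c : V → ℕ` is a proper coloring
of `G` iff `P_G(c) ≠ 0`; consequently, if some monomial `∏_v x_v^{t_v}` with all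
exponents `t_v < k` has nonzero coefficient in `P_G`, then `G` is `k`-choosable. -/
theorem graph_polynomial_proper_coloring_iff_and_choosable
    {V : Type} [Fintype V] [LinearOrder V] (G : SimpleGraph V) [DecidableRel G.Adj]
    (P : MvPolynomial V ℚ)
    (hP : P = ∏ p ∈ Finset.univ.filter (fun p : V × V => p.1 < p.2 ∧ G.Adj p.1 p.2),
      (X p.1 - X p.2)) :
    (∀ c : V → ℕ,
      ((∀ u v, G.Adj u v → c u ≠ c v) ↔ eval (fun v => (c v : ℚ)) P ≠ 0)) ∧
    (∀ k : ℕ, (∃ t : V →₀ ℕ, P.coeff t ≠ 0 ∧ ∀ v, t v < k) → Choosable G k) := by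
  change P = G.graphPolynomial ℚ at hP
  subst hP
  refine ⟨fun c => ?_, fun k ⟨t, ht, htk⟩ =>
    SimpleGraph.choosable_of_coeff_graphPolynomial_ne_zero ht htk⟩
  simp only [G.eval_graphPolynomial_ne_zero_iff, ne_eq, Nat.cast_inj]
end
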